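/- arXiv:2302.06242 — 9 statements merged into one kernel-verified Lean document; each statement's English description precedes it below -/
import Mathlib

section
/- Let K be a number field, let L ⊆ ℂ be a number field with ℚ-basis α_1,…,α_m, and let f : K → ℂ be a generalised polynomial map on K with f(x) ∈ L for all x ∈ K. Then there exist generalised polynomial maps f_1,…,f_m : K → ℝ on K, each taking values in ℚ, such that f(x) = ∑_{i=1}^m α_i · f_i(x) for all x ∈ K. -/
open Polynomial IntermediateField

/-- Generalised polynomial maps `ℝ^d → ℝ`: the smallest class of functions containing
constants and `ℝ`-linear functionals, closed under addition, multiplication and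
pointwise integer part. -/
inductive IsGP : {d : ℕ} → ((Fin d → ℝ) → ℝ) → Prop
  | const {d : ℕ} (c : ℝ) : IsGP (fun _ : Fin d → ℝ => c)
  | linear {d : ℕ} (φ : (Fin d → ℝ) →ₗ[ℝ] ℝ) : IsGP (fun x => φ x)
  | add {d : ℕ} {f g : (Fin d → ℝ) → ℝ} : IsGP f → IsGP g → IsGP (fun x => f x + g x)
  | mul {d : ℕ} {f g : (Fin d → ℝ) → ℝ} : IsGP f → IsGP g → IsGP (fun x => f x * g x)
  | floor {d : ℕ} {f : (Fin d → ℝ) → ℝ} : IsGP f → IsGP (fun x => (⌊f x⌋ : ℝ))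

/-- A real-valued map on a number field `K` is a generalised polynomial map on `K` if,
in the coordinates given by some `ℚ`-basis of `K`, it is given by a generalised
polynomial map `ℝ^n → ℝ`. -/
def IsGPMapR {K : Type*} [Field K] [Algebra ℚ K] (f : K → ℝ) : Prop :=
  ∃ (n : ℕ) (b : Module.Basis (Fin n) ℚ K) (g : (Fin n → ℝ) → ℝ),
    IsGP g ∧ ∀ x : K, f x = g (fun i => ((b.repr x) i : ℝ))

/-- A complex-valued map on `K` is a generalised polynomial map if its real and
imaginary parts are. -/
def IsGPMapC {K : Type*} [Field K] [Algebra ℚ K] (f : K → ℂ) : Prop :=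
  IsGPMapR (fun x => (f x).re) ∧ IsGPMapR (fun x => (f x).im)

/-- A generalised polynomial subset of a number field `K`. -/
def IsGPSet {K : Type*} [Field K] [Algebra ℚ K] (S : Set K) : Prop :=
  IsGPMapR (S.indicator fun _ => (1 : ℝ))

/-- A generalised polynomial subset of `ℚ`. -/
def IsGPSetQ (S : Set ℚ) : Prop :=
  ∃ g : (Fin 1 → ℝ) → ℝ, IsGP g ∧
    (∀ q : ℚ, q ∈ S → g (fun _ => (q : ℝ)) = 1) ∧
    (∀ q : ℚ, q ∉ S → g (fun _ => (q : ℝ)) = 0)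

/-- A generalised polynomial subset of `ℤ`. -/
def IsGPSetZ (E : Set ℤ) : Prop :=
  ∃ g : (Fin 1 → ℝ) → ℝ, IsGP g ∧
    (∀ m : ℤ, m ∈ E → g (fun _ => (m : ℝ)) = 1) ∧
    (∀ m : ℤ, m ∉ E → g (fun _ => (m : ℝ)) = 0)

/-- A Pisot number: a real algebraic integer `β > 1` all of whose other conjugates
have absolute value `< 1`. -/
def IsPisot (β : ℝ) : Prop :=
  IsIntegral ℤ β ∧ 1 < β ∧
    ∀ α : ℂ, aeval α (minpoly ℚ β) = 0 → α ≠ (β : ℂ) → ‖α‖ < 1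

/-- A Pisot unit: a Pisot number whose inverse is also an algebraic integer. -/
def IsPisotUnit (β : ℝ) : Prop := IsPisot β ∧ IsIntegral ℤ β⁻¹

/-- A Salem number: a real algebraic integer `β > 1` all of whose other conjugates
have absolute value `≤ 1`, with at least one conjugate of absolute value exactly `1`. -/
def IsSalem (β : ℝ) : Prop :=
  IsIntegral ℤ β ∧ 1 < β ∧
    (∀ α : ℂ, aeval α (minpoly ℚ β) = 0 → α ≠ (β : ℂ) → ‖α‖ ≤ 1) ∧
    (∃ α : ℂ, aeval α (minpoly ℚ β) = 0 ∧ α ≠ (β : ℂ) ∧ ‖α‖ = 1)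

/-- `u` is a linear recurrent sequence with characteristic polynomial `p`,
where `p = X^m - a_{m-1} X^{m-1} - ⋯ - a_0` (so `a_j = -p.coeff j`). -/
def IsLinRec (p : ℚ[X]) (u : ℕ → ℚ) : Prop :=
  ∀ i : ℕ, u (i + p.natDegree) =
    ∑ j ∈ Finset.range p.natDegree, (-(p.coeff j)) * u (i + j)

/-- A root of unity in a monoid. -/
def IsRootOfUnity {F : Type*} [Monoid F] (ω : F) : Prop := ∃ n : ℕ, 0 < n ∧ ω ^ n = 1

lemma IsGP.comp_linear : ∀ {d : ℕ} {g : (Fin d → ℝ) → ℝ}, IsGP g →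
    ∀ {n : ℕ} (A : (Fin n → ℝ) →ₗ[ℝ] (Fin d → ℝ)), IsGP (fun x => g (A x)) := by
  intro d g hg
  induction hg with
  | const c => intro n A; exact .const c
  | linear φ => intro n A; exact .linear (φ.comp A)
  | add h1 h2 ih1 ih2 => intro n A; exact .add (ih1 A) (ih2 A)
  | mul h1 h2 ih1 ih2 => intro n A; exact .mul (ih1 A) (ih2 A)
  | floor h ih => intro n A; exact .floor (ih A)

lemma IsGP.finsetSum {d : ℕ} {ι : Type*} (s : Finset ι) (g : ι → (Fin d → ℝ) → ℝ)
    (h : ∀ t ∈ s, IsGP (g t)) : IsGP (fun y => ∑ t ∈ s, g t y) := by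
  classical
  induction s using Finset.induction with
  | empty => simpa using IsGP.const (d := d) 0
  | @insert a s' hx ih =>
    have : (fun y => ∑ t ∈ insert a s', g t y) = fun y => g a y + ∑ t ∈ s', g t y := by
      funext y; rw [Finset.sum_insert hx]
    rw [this]
    exact .add (h a (Finset.mem_insert_self a s')) (ih fun t ht => h t (Finset.mem_insert_of_mem ht))

lemma gpmap_basis {K : Type*} [Field K] [Algebra ℚ K] {h : K → ℝ} (hh : IsGPMapR h)
    {n : ℕ} (b : Module.Basis (Fin n) ℚ K) :
    ∃ g : (Fin n → ℝ) → ℝ, IsGP g ∧ ∀ x : K, h x = g (fun i => ((b.repr x) i : ℝ)) := by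
  obtain ⟨n', b', g', hg', hrep⟩ := hh
  set M : Matrix (Fin n') (Fin n) ℝ := fun i' j => ((b'.repr (b j)) i' : ℝ) with hM
  refine ⟨fun y => g' (M.mulVecLin y), hg'.comp_linear M.mulVecLin, fun x => ?_⟩
  rw [hrep x]
  congr 1
  funext i'
  have : b'.repr x i' = ∑ j, b.repr x j * b'.repr (b j) i' := by
    conv_lhs => rw [← b.sum_repr x]
    rw [map_sum, Finsupp.finset_sum_apply]
    simp [Finsupp.smul_apply, smul_eq_mul, mul_comm]
  simp only [Matrix.mulVecLin_apply, Matrix.mulVec, dotProduct, hM, this]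
  push_cast
  exact Finset.sum_congr rfl fun j _ => mul_comm _ _

/-- Restriction of a map `ℝ^d → ℝ` to rational points. -/
def ratRestrict {d : ℕ} (g : (Fin d → ℝ) → ℝ) : (Fin d → ℚ) → ℝ :=
  fun q => g (fun i => (q i : ℝ))

/-- Rational-valued GP maps, restricted to rational points. -/
def ratGP (d : ℕ) : Set ((Fin d → ℚ) → ℝ) :=
  {F | ∃ h : (Fin d → ℝ) → ℝ, IsGP h ∧
    (∀ q : Fin d → ℚ, ∃ p : ℚ, h (fun i => (q i : ℝ)) = (p : ℝ)) ∧ F = ratRestrict h}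

lemma ratGP_mul {d : ℕ} {a b : (Fin d → ℚ) → ℝ} (ha : a ∈ ratGP d) (hb : b ∈ ratGP d) :
    a * b ∈ ratGP d := by
  obtain ⟨h1, hGP1, hq1, rfl⟩ := ha
  obtain ⟨h2, hGP2, hq2, rfl⟩ := hb
  refine ⟨fun x => h1 x * h2 x, .mul hGP1 hGP2, fun q => ?_, rfl⟩
  obtain ⟨p1, hp1⟩ := hq1 q
  obtain ⟨p2, hp2⟩ := hq2 q
  exact ⟨p1 * p2, by push_cast [hp1, hp2]; ring⟩

lemma mul_mem_span_ratGP {d : ℕ} {a b : (Fin d → ℚ) → ℝ}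
    (ha : a ∈ Submodule.span ℝ (ratGP d)) (hb : b ∈ Submodule.span ℝ (ratGP d)) :
    a * b ∈ Submodule.span ℝ (ratGP d) := by
  induction ha, hb using Submodule.span_induction₂ with
  | mem_mem x y hx hy => exact Submodule.subset_span (ratGP_mul hx hy)
  | zero_left y hy => simpa using Submodule.zero_mem _
  | zero_right x hx => simpa using Submodule.zero_mem _
  | add_left x y z _ _ _ h1 h2 => simpa [add_mul] using Submodule.add_mem _ h1 h2
  | add_right x y z _ _ _ h1 h2 => simpa [mul_add] using Submodule.add_mem _ h1 h2
  | smul_left r x y _ _ h => simpa [smul_mul_assoc] using Submodule.smul_mem _ r h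
  | smul_right r x y _ _ h => simpa [mul_smul_comm] using Submodule.smul_mem _ r h

lemma span_ratGP : ∀ {d : ℕ} {g : (Fin d → ℝ) → ℝ}, IsGP g →
    ratRestrict g ∈ Submodule.span ℝ (ratGP d) := by
  intro d g hg
  induction hg with
  | const c =>
    have : ratRestrict (fun _ : Fin d → ℝ => c) = c • ratRestrict (fun _ => (1 : ℝ)) := by
      funext q; simp [ratRestrict]
    rw [this]
    exact Submodule.smul_mem _ _ (Submodule.subset_span ⟨fun _ => 1, .const 1, fun q => ⟨1, by norm_num⟩, rfl⟩)
  | linear φ =>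
    have : ratRestrict (fun x => φ x) =
        ∑ i : Fin d, φ (fun j => if i = j then 1 else 0) • (fun q : Fin d → ℚ => ((q i : ℝ))) := by
      funext q
      have := pi_eq_sum_univ (fun i => ((q i : ℝ)))
      simp only [ratRestrict]
      conv_lhs => rw [this]
      rw [map_sum]
      simp [mul_comm]
    rw [this]
    refine Submodule.sum_mem _ fun i _ => Submodule.smul_mem _ _ (Submodule.subset_span ?_)
    exact ⟨fun x => LinearMap.proj i x, .linear (LinearMap.proj i), fun q => ⟨q i, rfl⟩, rfl⟩
  | add h1 h2 ih1 ih2 => exact Submodule.add_mem _ ih1 ih2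
  | mul h1 h2 ih1 ih2 => exact mul_mem_span_ratGP ih1 ih2
  | @floor f hf ih =>
    exact Submodule.subset_span ⟨fun x => (⌊f x⌋ : ℝ), .floor hf,
      fun q => ⟨⌊f (fun i => (q i : ℝ))⌋, by push_cast; rfl⟩, rfl⟩

/-- a generalised polynomial map `f : K → ℂ` taking values in a number
field `L ⊆ ℂ` with `ℚ`-basis `α_1, …, α_m` decomposes as `f = ∑ α_i f_i` with `f_i`
rational-valued generalised polynomial maps on `K`. -/
theorem stmt5 {K : Type*} [Field K] [NumberField K]
    (L : IntermediateField ℚ ℂ) [FiniteDimensional ℚ L]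
    (m : ℕ) (α : Module.Basis (Fin m) ℚ L)
    (f : K → ℂ) (hf : IsGPMapC f) (hfL : ∀ x : K, f x ∈ L) :
    ∃ F : Fin m → (K → ℝ),
      (∀ i, IsGPMapR (F i)) ∧
      (∀ i x, ∃ q : ℚ, F i x = (q : ℝ)) ∧
      (∀ x : K, f x = ∑ i, ((α i : ℂ) * (F i x : ℂ))) := by
  classical
  obtain ⟨hre, him⟩ := hf
  set n := Module.finrank ℚ K with hn
  let b : Module.Basis (Fin n) ℚ K := Module.finBasis ℚ K
  let κ : K → (Fin n → ℚ) := fun x i => b.repr x i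
  obtain ⟨g1, hg1, hrep1⟩ := gpmap_basis hre b
  obtain ⟨g2, hg2, hrep2⟩ := gpmap_basis him b
  obtain ⟨c1, hc1S, hc1sum⟩ := Submodule.mem_span_set.mp (span_ratGP hg1)
  obtain ⟨c2, hc2S, hc2sum⟩ := Submodule.mem_span_set.mp (span_ratGP hg2)
  let ι := (↥c1.support) ⊕ (↥c2.support)
  let mF : ι → ((Fin n → ℚ) → ℝ) := Sum.elim Subtype.val Subtype.val
  have hmem : ∀ t : ι, mF t ∈ ratGP n := by
    rintro (t | t)
    · exact hc1S t.2
    · exact hc2S t.2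
  let h : ι → ((Fin n → ℝ) → ℝ) := fun t => (hmem t).choose
  have hspec : ∀ t, IsGP (h t) ∧ (∀ q : Fin n → ℚ, ∃ p : ℚ, h t (fun i => (q i : ℝ)) = (p : ℝ))
      ∧ mF t = ratRestrict (h t) := fun t => (hmem t).choose_spec
  let c : ι → K → ℚ := fun t x => ((hspec t).2.1 (κ x)).choose
  have hc : ∀ t x, ((c t x : ℚ) : ℝ) = h t (fun i => ((b.repr x) i : ℝ)) :=
    fun t x => (((hspec t).2.1 (κ x)).choose_spec).symm
  have hmemval : ∀ t x, mF t (κ x) = ((c t x : ℚ) : ℝ) := by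
    intro t x
    rw [(hspec t).2.2, hc t x]
    rfl
  let ν : ι → ℂ := Sum.elim (fun t => ((c1 t.1 : ℝ) : ℂ)) (fun t => (c2 t.1 : ℝ) * Complex.I)
  have key : ∀ x : K, f x = ∑ t : ι, (c t x : ℚ) • ν t := by
    intro x
    have hre' : (f x).re = ∑ t : ↥c1.support, c1 t.1 * ((c (Sum.inl t) x : ℚ) : ℝ) := by
      rw [hrep1 x]
      have e1 : g1 (fun i => ((b.repr x) i : ℝ)) = ratRestrict g1 (κ x) := rfl
      rw [e1, ← hc1sum, Finsupp.sum, Finset.sum_apply, ← Finset.sum_attach]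
      refine Finset.sum_congr rfl fun t _ => ?_
      have := hmemval (Sum.inl t) x
      simp only [mF, Sum.elim_inl] at this
      simp [this]
    have him' : (f x).im = ∑ t : ↥c2.support, c2 t.1 * ((c (Sum.inr t) x : ℚ) : ℝ) := by
      rw [hrep2 x]
      have e1 : g2 (fun i => ((b.repr x) i : ℝ)) = ratRestrict g2 (κ x) := rfl
      rw [e1, ← hc2sum, Finsupp.sum, Finset.sum_apply, ← Finset.sum_attach]
      refine Finset.sum_congr rfl fun t _ => ?_
      have := hmemval (Sum.inr t) x
      simp only [mF, Sum.elim_inr] at this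
      simp [this]
    rw [← Complex.re_add_im (f x), hre', him']
    have hsplit : (∑ t : ι, (c t x : ℚ) • ν t)
        = (∑ t : ↥c1.support, (c (Sum.inl t) x : ℚ) • ν (Sum.inl t))
          + ∑ t : ↥c2.support, (c (Sum.inr t) x : ℚ) • ν (Sum.inr t) :=
      Fintype.sum_sum_type _
    rw [hsplit]
    simp only [ν, Sum.elim_inl, Sum.elim_inr, Rat.smul_def]
    push_cast
    rw [Finset.sum_mul]
    congr 1
    · exact Finset.sum_congr rfl fun t _ => by ring
    · exact Finset.sum_congr rfl fun t _ => by ring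
  -- projection onto L
  let Lsub : Submodule ℚ ℂ := Subalgebra.toSubmodule L.toSubalgebra
  obtain ⟨Cc, hCc⟩ := Submodule.exists_isCompl Lsub
  let π := Lsub.linearProjOfIsCompl Cc hCc
  let σ : ℂ →ₗ[ℚ] ℂ := Lsub.subtype.comp π
  have hσL : ∀ z : ℂ, z ∈ L → σ z = z := by
    intro z hz
    have hz' : z ∈ Lsub := hz
    have h0 : π z = ⟨z, hz'⟩ := Submodule.linearProjOfIsCompl_apply_left hCc ⟨z, hz'⟩
    show Lsub.subtype (π z) = z
    rw [h0]
    rfl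
  have hσmem : ∀ z : ℂ, σ z ∈ L := fun z => (π z).2
  let eL : ι → ↥L := fun t => ⟨σ (ν t), hσmem (ν t)⟩
  let p : ι → Fin m → ℚ := fun t i => α.repr (eL t) i
  refine ⟨fun i x => ((∑ t : ι, p t i * c t x : ℚ) : ℝ), ?_, ?_, ?_⟩
  · intro i
    refine ⟨n, b, fun y => ∑ t : ι, (p t i : ℝ) * h t y, ?_, ?_⟩
    · exact IsGP.finsetSum Finset.univ _ fun t _ => .mul (.const _) (hspec t).1
    · intro x
      push_cast
      exact Finset.sum_congr rfl fun t _ => by rw [hc t x]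
  · intro i x
    exact ⟨∑ t : ι, p t i * c t x, rfl⟩
  · intro x
    have h1 : f x = σ (f x) := (hσL (f x) (hfL x)).symm
    have h2 : σ (f x) = ∑ t : ι, (c t x : ℚ) • σ (ν t) := by
      rw [key x, map_sum]
      exact Finset.sum_congr rfl fun t _ => by rw [map_smul]
    have h3 : ∀ t : ι, σ (ν t) = ∑ i, p t i • ((α i : ↥L) : ℂ) := by
      intro t
      have : σ (ν t) = ((eL t : ↥L) : ℂ) := rfl
      rw [this, ← Module.Basis.sum_repr α (eL t)]
      simp only [AddSubmonoidClass.coe_finset_sum]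
      exact Finset.sum_congr rfl fun i _ => by rw [Rat.smul_def, Rat.smul_def]; push_cast; rfl
    calc f x = ∑ t : ι, (c t x : ℚ) • σ (ν t) := h1.trans h2
    _ = ∑ t : ι, ∑ i, (c t x * p t i) • ((α i : ↥L) : ℂ) := by
        refine Finset.sum_congr rfl fun t _ => ?_
        rw [h3 t, Finset.smul_sum]
        exact Finset.sum_congr rfl fun i _ => by rw [smul_smul]
    _ = ∑ i, ∑ t : ι, (c t x * p t i) • ((α i : ↥L) : ℂ) := Finset.sum_comm
    _ = ∑ i, ((α i : ℂ) * (((∑ t : ι, p t i * c t x : ℚ) : ℝ) : ℂ)) := by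
        refine Finset.sum_congr rfl fun i _ => ?_
        rw [← Finset.sum_smul, Rat.smul_def]
        push_cast
        rw [Finset.sum_mul, Finset.mul_sum]
        exact Finset.sum_congr rfl fun t _ => by ring
end

section
/- Let K be a number field and let f : K → ℂ be a generalised polynomial map on K. Then the map g : K → ℝ defined by g(x) = 1 if f(x) = 0 and g(x) = 0 otherwise is a generalised polynomial map on K. -/
open Polynomial IntermediateField

lemma IsGP.comp_linear_s6 {d e : ℕ} {g : (Fin d → ℝ) → ℝ} (hg : IsGP g)
    (L : (Fin e → ℝ) →ₗ[ℝ] (Fin d → ℝ)) : IsGP (fun y => g (L y)) := by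
  induction hg with
  | const c => exact IsGP.const c
  | linear φ => exact IsGP.linear (φ.comp L)
  | add _ _ ih1 ih2 => exact IsGP.add ih1 ih2
  | mul _ _ ih1 ih2 => exact IsGP.mul ih1 ih2
  | floor _ ih => exact IsGP.floor ih

lemma floor_trick_int (m : ℤ) : ((⌊(m:ℝ)⌋ : ℝ) + (⌊-(m:ℝ)⌋ : ℝ) + 1) = 1 := by
  rw [← Int.cast_neg, Int.floor_intCast, Int.floor_intCast]; push_cast; ring

lemma floor_trick_not (t : ℝ) (h : ∀ m : ℤ, t ≠ (m : ℝ)) :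
    ((⌊t⌋ : ℝ) + (⌊-t⌋ : ℝ) + 1) = 0 := by
  have h1 : ⌊-t⌋ = -⌊t⌋ - 1 := by
    rw [Int.floor_eq_iff]
    have h2 : (⌊t⌋ : ℝ) < t := (Int.floor_le t).lt_of_ne (fun e => h ⌊t⌋ e.symm)
    have h3 : t < ⌊t⌋ + 1 := Int.lt_floor_add_one t
    constructor <;> push_cast <;> linarith
  rw [h1]; push_cast; ring

/-- the indicator function of the zero set of a generalised polynomial
map `f : K → ℂ` is a generalised polynomial map on `K`. -/
theorem stmt6 {K : Type*} [Field K] [NumberField K]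
    (f : K → ℂ) (hf : IsGPMapC f) :
    IsGPMapR (Set.indicator {x : K | f x = 0} fun _ => (1 : ℝ)) := by
  classical
  obtain ⟨⟨n₁, b₁, g₁, hg₁, he₁⟩, ⟨n₂, b₂, g₂, hg₂, he₂⟩⟩ := hf
  set M : Matrix (Fin n₂) (Fin n₁) ℝ := fun j i => ((b₂.repr (b₁ i)) j : ℝ) with hM
  set g₂' : (Fin n₁ → ℝ) → ℝ := fun y => g₂ (M.mulVecLin y) with hg2'
  have hGP2' : IsGP g₂' := hg₂.comp_linear_s6 M.mulVecLin
  set T : (Fin n₁ → ℝ) → ℝ := fun y => g₁ y * g₁ y + g₂' y * g₂' y with hTdef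
  have hTGP : IsGP T := IsGP.add (IsGP.mul hg₁ hg₁) (IsGP.mul hGP2' hGP2')
  set G : (Fin n₁ → ℝ) → ℝ := fun y =>
    ((⌊T y⌋ : ℝ) + (⌊-(T y)⌋ : ℝ) + 1) *
      ((⌊Real.sqrt 2 * T y⌋ : ℝ) + (⌊-(Real.sqrt 2 * T y)⌋ : ℝ) + 1) with hGdef
  have hGGP : IsGP G := by
    have hneg : IsGP (fun y => -(T y)) := by
      have := IsGP.mul (IsGP.const (d := n₁) (-1)) hTGP
      simpa using this
    have hs : IsGP (fun y => Real.sqrt 2 * T y) := IsGP.mul (IsGP.const _) hTGP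
    have hsneg : IsGP (fun y => -(Real.sqrt 2 * T y)) := by
      have := IsGP.mul (IsGP.const (d := n₁) (-1)) hs
      simpa [neg_mul] using this
    exact IsGP.mul (IsGP.add (IsGP.add hTGP.floor hneg.floor) (IsGP.const 1))
      (IsGP.add (IsGP.add hs.floor hsneg.floor) (IsGP.const 1))
  refine ⟨n₁, b₁, G, hGGP, ?_⟩
  intro x
  set y : Fin n₁ → ℝ := fun i => ((b₁.repr x) i : ℝ) with hy
  have hcoordQ : ∀ j, b₂.repr x j = ∑ i, (b₁.repr x i) * (b₂.repr (b₁ i) j) := by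
    intro j
    conv_lhs => rw [← b₁.sum_repr x]
    rw [map_sum]
    simp [Finsupp.finset_sum_apply, Finsupp.smul_apply, smul_eq_mul]
  have hcoord : M.mulVecLin y = fun j => ((b₂.repr x) j : ℝ) := by
    funext j
    have : M.mulVecLin y j = ∑ i, M j i * y i := by
      simp [Matrix.mulVecLin_apply, Matrix.mulVec, dotProduct]
    rw [this, hcoordQ j]
    push_cast
    exact Finset.sum_congr rfl (fun i _ => by rw [hM, hy]; ring)
  have hre : g₁ y = (f x).re := (he₁ x).symm
  have him : g₂' y = (f x).im := by
    show g₂ (M.mulVecLin y) = (f x).im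
    rw [hcoord]; exact (he₂ x).symm
  have hT : T y = Complex.normSq (f x) := by
    rw [hTdef]; simp only [hre, him, Complex.normSq_apply]
  by_cases hx : f x = 0
  · have hT0 : T y = 0 := by rw [hT, hx]; simp
    have : G y = 1 := by
      rw [hGdef]; simp only [hT0, mul_zero, neg_zero, Int.floor_zero]
      norm_num
    rw [this, Set.indicator_of_mem (by simpa using hx)]
  · have hTpos : 0 < T y := by rw [hT]; exact Complex.normSq_pos.mpr hx
    rw [Set.indicator_of_notMem (by simpa using hx)]
    by_cases hint : ∃ m : ℤ, T y = (m : ℝ)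
    · obtain ⟨m, hm⟩ := hint
      have hm0 : m ≠ 0 := by
        rintro rfl; rw [hm] at hTpos; simp at hTpos
      have hirr : Irrational (Real.sqrt 2 * (m : ℝ)) := irrational_sqrt_two.mul_intCast hm0
      have : ((⌊Real.sqrt 2 * T y⌋ : ℝ) + (⌊-(Real.sqrt 2 * T y)⌋ : ℝ) + 1) = 0 := by
        rw [hm]; exact floor_trick_not _ (fun k => hirr.ne_int k)
      rw [hGdef]; simp only at this ⊢; rw [this, mul_zero]
    · push_neg at hint
      have : ((⌊T y⌋ : ℝ) + (⌊-(T y)⌋ : ℝ) + 1) = 0 := floor_trick_not _ hint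
      rw [hGdef]; simp only at this ⊢; rw [this, zero_mul]
end

section
/- Let K be a number field given as a subfield of ℝ. Then the set of all x ∈ K that are Pisot units is a generalised polynomial subset of K. -/
open Polynomial IntermediateField

namespace GPAux

open scoped Classical

variable {d : ℕ}

lemma isGP_proj (i : Fin d) : IsGP (fun y : Fin d → ℝ => y i) := by
  simpa using IsGP.linear (LinearMap.proj (R := ℝ) (φ := fun _ : Fin d => ℝ) i)

lemma isGP_neg {f : (Fin d → ℝ) → ℝ} (hf : IsGP f) : IsGP (fun y => -(f y)) := by
  have h : (fun y : Fin d → ℝ => -(f y)) = fun y => (-1 : ℝ) * f y := by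
    funext y; ring
  rw [h]; exact IsGP.mul (IsGP.const (-1)) hf

lemma isGP_sub {f g : (Fin d → ℝ) → ℝ} (hf : IsGP f) (hg : IsGP g) :
    IsGP (fun y => f y - g y) := by
  have h : (fun y : Fin d → ℝ => f y - g y) = fun y => f y + -(g y) := by
    funext y; ring
  rw [h]; exact IsGP.add hf (isGP_neg hg)

lemma isGP_sum {γ : Type*} (s : Finset γ) (F : γ → (Fin d → ℝ) → ℝ)
    (h : ∀ i ∈ s, IsGP (F i)) : IsGP (fun y => ∑ i ∈ s, F i y) := by
  induction s using Finset.induction_on with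
  | empty => simpa using IsGP.const (d := d) 0
  | @insert a s' hx ih =>
    simp only [Finset.sum_insert hx]
    exact IsGP.add (h a (Finset.mem_insert_self a s'))
      (ih fun i hi => h i (Finset.mem_insert_of_mem hi))

lemma isGP_prod {γ : Type*} (s : Finset γ) (F : γ → (Fin d → ℝ) → ℝ)
    (h : ∀ i ∈ s, IsGP (F i)) : IsGP (fun y => ∏ i ∈ s, F i y) := by
  induction s using Finset.induction_on with
  | empty => simpa using IsGP.const (d := d) 1
  | @insert a s' hx ih =>
    simp only [Finset.prod_insert hx]
    exact IsGP.mul (h a (Finset.mem_insert_self a s'))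
      (ih fun i hi => h i (Finset.mem_insert_of_mem hi))

/-- δ-function: `dzR t = 1` if `√2 * t ∈ ℤ` (for rational `t`: iff `t = 0`), else `0`. -/
noncomputable def dzR (t : ℝ) : ℝ :=
  1 + (⌊-(Real.sqrt 2 * t - (⌊Real.sqrt 2 * t⌋ : ℝ))⌋ : ℝ)

lemma isGP_dzR {f : (Fin d → ℝ) → ℝ} (hf : IsGP f) : IsGP (fun y => dzR (f y)) := by
  have h2f : IsGP (fun y => Real.sqrt 2 * f y) := IsGP.mul (IsGP.const _) hf
  exact IsGP.add (IsGP.const 1) (IsGP.floor (isGP_neg (isGP_sub h2f (IsGP.floor h2f))))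

lemma dzR_rat (q : ℚ) : dzR (q : ℝ) = if q = 0 then 1 else 0 := by
  by_cases h : q = 0
  · simp [dzR, h]
  · have hirr : Irrational (Real.sqrt 2 * (q : ℝ)) := by
      simpa [mul_comm] using (irrational_sqrt_two.ratCast_mul h)
    have hne : Real.sqrt 2 * (q : ℝ) ≠ (⌊Real.sqrt 2 * (q : ℝ)⌋ : ℝ) :=
      hirr.ne_int _
    have h1 : (⌊Real.sqrt 2 * (q : ℝ)⌋ : ℝ) ≤ Real.sqrt 2 * (q : ℝ) := Int.floor_le _
    have h2 : Real.sqrt 2 * (q : ℝ) < (⌊Real.sqrt 2 * (q : ℝ)⌋ : ℝ) + 1 :=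
      Int.lt_floor_add_one _
    have hpos : 0 < Real.sqrt 2 * (q : ℝ) - (⌊Real.sqrt 2 * (q : ℝ)⌋ : ℝ) := by
      rcases lt_or_eq_of_le h1 with h' | h'
      · linarith
      · exact absurd h'.symm hne
    have hfl : ⌊-(Real.sqrt 2 * (q : ℝ) - (⌊Real.sqrt 2 * (q : ℝ)⌋ : ℝ))⌋ = -1 := by
      rw [Int.floor_eq_iff]
      push_cast
      constructor <;> linarith
    rw [dzR, hfl]
    simp [h]

/-- Indicator (on rational inputs) of being an integer. -/
noncomputable def chiZ (t : ℝ) : ℝ := dzR (t - (⌊t⌋ : ℝ))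

lemma isGP_chiZ {f : (Fin d → ℝ) → ℝ} (hf : IsGP f) : IsGP (fun y => chiZ (f y)) :=
  isGP_dzR (isGP_sub hf (IsGP.floor hf))

lemma chiZ_rat (q : ℚ) : chiZ (q : ℝ) = if (∃ m : ℤ, q = m) then 1 else 0 := by
  have h1 : ((q : ℝ) - (⌊(q : ℝ)⌋ : ℝ)) = ((q - (⌊q⌋ : ℚ) : ℚ) : ℝ) := by
    rw [Rat.floor_cast]; push_cast; ring
  rw [chiZ, h1, dzR_rat]
  by_cases h : ∃ m : ℤ, q = m
  · obtain ⟨m, rfl⟩ := h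
    simp
  · rw [if_neg h, if_neg]
    intro hc
    exact h ⟨⌊q⌋, by linarith [sub_eq_zero.mp hc]⟩

/-- Exact indicator of the open interval `(-1, 1)`. -/
noncomputable def gate01 (t : ℝ) : ℝ := dzR ((⌊t⌋ : ℝ) * (⌊-t⌋ : ℝ))

lemma isGP_gate01 {f : (Fin d → ℝ) → ℝ} (hf : IsGP f) : IsGP (fun y => gate01 (f y)) :=
  isGP_dzR (IsGP.mul (IsGP.floor hf) (IsGP.floor (isGP_neg hf)))

lemma gate01_eq (t : ℝ) : gate01 t = if (-1 < t ∧ t < 1) then 1 else 0 := by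
  have h1 : ((⌊t⌋ : ℝ) * (⌊-t⌋ : ℝ)) = (((⌊t⌋ * ⌊-t⌋ : ℤ) : ℚ) : ℝ) := by push_cast; ring
  rw [gate01, h1, dzR_rat]
  have key : (⌊t⌋ * ⌊-t⌋ = 0) ↔ (-1 < t ∧ t < 1) := by
    rw [mul_eq_zero, Int.floor_eq_zero_iff, Int.floor_eq_zero_iff]
    simp only [Set.mem_Ico]
    constructor
    · rintro (⟨ha, hb⟩ | ⟨ha, hb⟩) <;> constructor <;> linarith
    · rintro ⟨hl, hr⟩
      rcases le_or_gt 0 t with h | h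
      · left; exact ⟨h, hr⟩
      · right; constructor <;> linarith
  by_cases h : -1 < t ∧ t < 1
  · rw [if_pos h, if_pos (by exact_mod_cast (key.mpr h))]
  · rw [if_neg h, if_neg]
    intro hc
    exact h (key.mp (by exact_mod_cast hc))

end GPAux

section Main

open GPAux NumberField

variable (K : IntermediateField ℚ ℝ) [NumberField ↥K]

/-- dimension -/
noncomputable def nn : ℕ :=
  Fintype.card (Module.Free.ChooseBasisIndex ℤ (RingOfIntegers ↥K))

/-- the integral basis, reindexed by `Fin`. -/
noncomputable def bb : Module.Basis (Fin (nn K)) ℚ ↥K :=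
  (NumberField.integralBasis ↥K).reindex (Fintype.equivFin _)

/-- coordinates -/
noncomputable def cx (x : ↥K) : Fin (nn K) → ℝ := fun i => ((bb K).repr x i : ℝ)

/-- the inclusion `K → ℂ` as a `ℚ`-algebra map. -/
noncomputable def iotaC : ↥K →ₐ[ℚ] ℂ :=
  (Complex.ofRealAm.restrictScalars ℚ).comp (IsScalarTower.toAlgHom ℚ (↥K) ℝ)

omit [NumberField ↥K] in
lemma iotaC_apply (x : ↥K) : iotaC K x = ((x : ℝ) : ℂ) := rfl

open scoped Classical in
/-- `f` is a GP function computing (via the coordinates of `K`) the indicator of `P`. -/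
def GateFor (f : (Fin (nn K) → ℝ) → ℝ) (P : ↥K → Prop) : Prop :=
  IsGP f ∧ ∀ x : ↥K, f (cx K x) = if P x then 1 else 0

variable {K}

open scoped Classical

lemma GateFor.and {f g : (Fin (nn K) → ℝ) → ℝ} {P Q : ↥K → Prop}
    (hf : GateFor K f P) (hg : GateFor K g Q) :
    GateFor K (fun y => f y * g y) (fun x => P x ∧ Q x) := by
  refine ⟨IsGP.mul hf.1 hg.1, fun x => ?_⟩
  show f (cx K x) * g (cx K x) = _
  rw [hf.2 x, hg.2 x]
  by_cases hP : P x <;> by_cases hQ : Q x <;> simp [hP, hQ]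

lemma GateFor.or {f g : (Fin (nn K) → ℝ) → ℝ} {P Q : ↥K → Prop}
    (hf : GateFor K f P) (hg : GateFor K g Q) :
    GateFor K (fun y => f y + g y - f y * g y) (fun x => P x ∨ Q x) := by
  refine ⟨isGP_sub (IsGP.add hf.1 hg.1) (IsGP.mul hf.1 hg.1), fun x => ?_⟩
  show f (cx K x) + g (cx K x) - f (cx K x) * g (cx K x) = _
  rw [hf.2 x, hg.2 x]
  by_cases hP : P x <;> by_cases hQ : Q x <;> simp [hP, hQ]

lemma GateFor.congr {f : (Fin (nn K) → ℝ) → ℝ} {P Q : ↥K → Prop}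
    (h : ∀ x, P x ↔ Q x) (hf : GateFor K f P) : GateFor K f Q := by
  refine ⟨hf.1, fun x => ?_⟩
  rw [hf.2 x]
  by_cases hP : P x
  · rw [if_pos hP, if_pos ((h x).mp hP)]
  · rw [if_neg hP, if_neg (fun hq => hP ((h x).mpr hq))]

lemma GateFor.prod {γ : Type*} (s : Finset γ) (F : γ → (Fin (nn K) → ℝ) → ℝ)
    (P : γ → ↥K → Prop) (h : ∀ i ∈ s, GateFor K (F i) (P i)) :
    GateFor K (fun y => ∏ i ∈ s, F i y) (fun x => ∀ i ∈ s, P i x) := by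
  induction s using Finset.induction_on with
  | empty =>
    refine ⟨by simpa using IsGP.const (d := nn K) 1, fun x => by simp⟩
  | @insert a s' hx ih =>
    have h1 := h a (Finset.mem_insert_self a s')
    have h2 := ih fun i hi => h i (Finset.mem_insert_of_mem hi)
    have h3 := h1.and h2
    refine GateFor.congr (P := fun x => P a x ∧ ∀ i ∈ s', P i x) (fun x => ?_) ?_
    · exact (Iff.symm (by simp [Finset.forall_mem_insert]))
    · refine ⟨?_, fun x => ?_⟩
      · have := h3.1
        simp only [Finset.prod_insert hx]
        exact this
      · have := h3.2 x
        simp only [Finset.prod_insert hx]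
        exact this

/-- atom: a rational linear functional vanishes. -/
lemma gate_ratLin (L : ↥K →ₗ[ℚ] ℚ) :
    GateFor K (fun y => dzR (∑ j, (L ((bb K) j) : ℝ) * y j)) (fun x => L x = 0) := by
  constructor
  · exact isGP_dzR (isGP_sum _ _ fun j _ => IsGP.mul (IsGP.const _) (isGP_proj j))
  · intro x
    have hval : (∑ j, (L ((bb K) j) : ℝ) * (cx K x j)) = ((L x : ℚ) : ℝ) := by
      have hx : L x = ∑ j, ((bb K).repr x j) * L ((bb K) j) := by
        conv_lhs => rw [← Module.Basis.sum_repr (bb K) x]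
        rw [map_sum]
        congr 1; funext j
        rw [map_smul, smul_eq_mul]
      rw [hx]
      push_cast
      congr 1; funext j
      rw [cx]; ring
    show dzR (∑ j, (L ((bb K) j) : ℝ) * (cx K x j)) = _
    rw [hval, dzR_rat]
    by_cases h : L x = 0 <;> simp [h]

/-- atom: the `i`-th coordinate is an integer. -/
lemma gate_intCoord (i : Fin (nn K)) :
    GateFor K (fun y => chiZ (y i)) (fun x => ∃ m : ℤ, (bb K).repr x i = m) := by
  refine ⟨isGP_chiZ (isGP_proj i), fun x => ?_⟩
  show chiZ (cx K x i) = _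
  have h0 : cx K x i = (((bb K).repr x i : ℚ) : ℝ) := rfl
  rw [h0, chiZ_rat]

end Main

section Main2

open GPAux NumberField
open scoped Classical

variable {d : ℕ}

lemma isGP_cprod {γ : Type*} (s : Finset γ) (F : γ → (Fin d → ℝ) → ℂ)
    (h : ∀ i ∈ s, IsGP (fun y => (F i y).re) ∧ IsGP (fun y => (F i y).im)) :
    IsGP (fun y => (∏ i ∈ s, F i y).re) ∧ IsGP (fun y => (∏ i ∈ s, F i y).im) := by
  induction s using Finset.induction_on with
  | empty =>
    constructor
    · simpa using IsGP.const (d := d) 1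
    · simpa using IsGP.const (d := d) 0
  | @insert a s' hx ih =>
    have h1 := h a (Finset.mem_insert_self a s')
    have h2 := ih fun i hi => h i (Finset.mem_insert_of_mem hi)
    constructor
    · have : (fun y => (∏ i ∈ insert a s', F i y).re)
          = fun y => (F a y).re * (∏ i ∈ s', F i y).re - (F a y).im * (∏ i ∈ s', F i y).im := by
        funext y; rw [Finset.prod_insert hx, Complex.mul_re]
      rw [this]
      exact isGP_sub (IsGP.mul h1.1 h2.1) (IsGP.mul h1.2 h2.2)
    · have : (fun y => (∏ i ∈ insert a s', F i y).im)
          = fun y => (F a y).re * (∏ i ∈ s', F i y).im + (F a y).im * (∏ i ∈ s', F i y).re := by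
        funext y; rw [Finset.prod_insert hx, Complex.mul_im]
      rw [this]
      exact IsGP.add (IsGP.mul h1.1 h2.2) (IsGP.mul h1.2 h2.1)

variable (K : IntermediateField ℚ ℝ) [NumberField ↥K]

/-- Gateable predicate -/
def Gateable (P : ↥K → Prop) : Prop := ∃ f, GateFor K f P

variable {K}

lemma GateFor.gateable {f : (Fin (nn K) → ℝ) → ℝ} {P : ↥K → Prop} (h : GateFor K f P) :
    Gateable K P := ⟨f, h⟩

lemma Gateable.and {P Q : ↥K → Prop} (hP : Gateable K P) (hQ : Gateable K Q) :
    Gateable K (fun x => P x ∧ Q x) := by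
  obtain ⟨f, hf⟩ := hP; obtain ⟨g, hg⟩ := hQ; exact ⟨_, hf.and hg⟩

lemma Gateable.or {P Q : ↥K → Prop} (hP : Gateable K P) (hQ : Gateable K Q) :
    Gateable K (fun x => P x ∨ Q x) := by
  obtain ⟨f, hf⟩ := hP; obtain ⟨g, hg⟩ := hQ; exact ⟨_, hf.or hg⟩

lemma Gateable.congr {P Q : ↥K → Prop} (hP : Gateable K P) (h : ∀ x, P x ↔ Q x) :
    Gateable K Q := by
  obtain ⟨f, hf⟩ := hP; exact ⟨f, hf.congr h⟩

lemma Gateable.finprod {γ : Type*} (s : Finset γ) (P : γ → ↥K → Prop)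
    (h : ∀ i ∈ s, Gateable K (P i)) : Gateable K (fun x => ∀ i ∈ s, P i x) := by
  have h' : ∀ i : γ, ∃ f, i ∈ s → GateFor K f (P i) := by
    intro i
    by_cases hi : i ∈ s
    · obtain ⟨f, hf⟩ := h i hi; exact ⟨f, fun _ => hf⟩
    · exact ⟨fun _ => 1, fun hi' => absurd hi' hi⟩
  choose F hF using h'
  exact ⟨_, GateFor.prod s F P (fun i hi => hF i hi)⟩

/-- real and imaginary parts of an embedding, in coordinates -/
noncomputable def reL (σ : ↥K →ₐ[ℚ] ℂ) : (Fin (nn K) → ℝ) → ℝ :=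
  fun y => ∑ j, (σ ((bb K) j)).re * y j

noncomputable def imL (σ : ↥K →ₐ[ℚ] ℂ) : (Fin (nn K) → ℝ) → ℝ :=
  fun y => ∑ j, (σ ((bb K) j)).im * y j

lemma isGP_reL (σ : ↥K →ₐ[ℚ] ℂ) : IsGP (reL σ) :=
  isGP_sum _ _ fun j _ => IsGP.mul (IsGP.const _) (isGP_proj j)

lemma isGP_imL (σ : ↥K →ₐ[ℚ] ℂ) : IsGP (imL σ) :=
  isGP_sum _ _ fun j _ => IsGP.mul (IsGP.const _) (isGP_proj j)

lemma sigma_apply (σ : ↥K →ₐ[ℚ] ℂ) (x : ↥K) :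
    σ x = ∑ j, (((bb K).repr x j : ℝ) : ℂ) * σ ((bb K) j) := by
  conv_lhs => rw [← Module.Basis.sum_repr (bb K) x]
  rw [map_sum]
  congr 1; funext j
  rw [map_rat_smul, Rat.smul_def]
  norm_cast

lemma reL_cx (σ : ↥K →ₐ[ℚ] ℂ) (x : ↥K) : reL σ (cx K x) = (σ x).re := by
  rw [sigma_apply σ x, Complex.re_sum, reL]
  congr 1; funext j
  rw [Complex.re_ofReal_mul]
  show (σ ((bb K) j)).re * cx K x j = _
  rw [cx]; ring

lemma imL_cx (σ : ↥K →ₐ[ℚ] ℂ) (x : ↥K) : imL σ (cx K x) = (σ x).im := by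
  rw [sigma_apply σ x, Complex.im_sum, imL]
  congr 1; funext j
  rw [Complex.im_ofReal_mul]
  show (σ ((bb K) j)).im * cx K x j = _
  rw [cx]; ring

/-- gate: `|σ x|² < 1` -/
lemma gate_sq (σ : ↥K →ₐ[ℚ] ℂ) :
    GateFor K (fun y => gate01 (reL σ y * reL σ y + imL σ y * imL σ y))
      (fun x => Complex.normSq (σ x) < 1) := by
  constructor
  · exact isGP_gate01 (IsGP.add (IsGP.mul (isGP_reL σ) (isGP_reL σ))
      (IsGP.mul (isGP_imL σ) (isGP_imL σ)))
  · intro x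
    show gate01 (reL σ (cx K x) * reL σ (cx K x) + imL σ (cx K x) * imL σ (cx K x)) = _
    rw [reL_cx, imL_cx, gate01_eq]
    have hnsq : (σ x).re * (σ x).re + (σ x).im * (σ x).im = Complex.normSq (σ x) := by
      rw [Complex.normSq_apply]
    rw [hnsq]
    have hnn := Complex.normSq_nonneg (σ x)
    by_cases h : Complex.normSq (σ x) < 1
    · rw [if_pos ⟨by linarith, h⟩, if_pos h]
    · rw [if_neg (fun hc => h hc.2), if_neg h]

end Main2

section Main3

open GPAux NumberField
open scoped Classical

variable {K : IntermediateField ℚ ℝ} [NumberField ↥K]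

/-- gate: `σ x = x` (as complex numbers) -/
lemma gate_eqId (σ : ↥K →ₐ[ℚ] ℂ) : Gateable K (fun x => σ x = iotaC K x) := by
  set D := (σ.toLinearMap : ↥K →ₗ[ℚ] ℂ) - (iotaC K).toLinearMap with hD
  set U : Submodule ℚ ↥K := LinearMap.ker D with hU
  set qb := Module.finBasis ℚ (↥K ⧸ U) with hqb
  have base : ∀ i ∈ (Finset.univ : Finset (Fin (Module.finrank ℚ (↥K ⧸ U)))),
      Gateable K (fun x => (qb.coord i).comp U.mkQ x = 0) := by
    intro i _
    exact (gate_ratLin ((qb.coord i).comp U.mkQ)).gateable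
  refine (Gateable.finprod Finset.univ _ base).congr fun x => ?_
  constructor
  · intro h
    have hq : U.mkQ x = 0 := by
      have : ∀ i, qb.repr (U.mkQ x) i = 0 := by
        intro i
        simpa [Module.Basis.coord_apply] using h i (Finset.mem_univ i)
      have h0 : qb.repr (U.mkQ x) = 0 := by
        ext i; simpa using this i
      exact qb.repr.injective (by rw [h0, map_zero])
    have hx : x ∈ U := by
      rwa [Submodule.mkQ_apply, Submodule.Quotient.mk_eq_zero] at hq
    have := LinearMap.mem_ker.mp hx
    rw [hD] at this
    have := sub_eq_zero.mp (by simpa using this)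
    simpa using this
  · intro h i _
    have hx : x ∈ U := by
      rw [hU, LinearMap.mem_ker, hD]
      simp [sub_eq_zero, h]
    have hq : U.mkQ x = 0 := by
      rw [Submodule.mkQ_apply, Submodule.Quotient.mk_eq_zero]
      exact hx
    simp [hq]

end Main3

section Main4

open GPAux NumberField
open scoped Classical

variable (K : IntermediateField ℚ ℝ) [NumberField ↥K]

/-- the norm form, as a polynomial function of the coordinates -/
noncomputable def normPoly : (Fin (nn K) → ℝ) → ℝ := fun y =>
  (Matrix.of fun i j =>
    ∑ k, (((Algebra.leftMulMatrix (bb K) ((bb K) k)) i j : ℚ) : ℝ) * y k).det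

lemma isGP_normPoly : IsGP (normPoly K) := by
  have h : normPoly K = fun y => ∑ σ : Equiv.Perm (Fin (nn K)),
      ((Equiv.Perm.sign σ : ℤ) : ℝ) *
        ∏ i, ∑ k, (((Algebra.leftMulMatrix (bb K) ((bb K) k)) (σ i) i : ℚ) : ℝ) * y k := by
    funext y
    rw [normPoly, Matrix.det_apply']
    rfl
  rw [h]
  exact isGP_sum _ _ fun σ _ => IsGP.mul (IsGP.const _)
    (isGP_prod _ _ fun i _ => isGP_sum _ _ fun k _ => IsGP.mul (IsGP.const _) (isGP_proj k))

lemma normPoly_cx (x : ↥K) : normPoly K (cx K x) = ((Algebra.norm ℚ x : ℚ) : ℝ) := by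
  have hx : (Algebra.leftMulMatrix (bb K)) x
      = ∑ k, (bb K).repr x k • (Algebra.leftMulMatrix (bb K)) ((bb K) k) := by
    conv_lhs => rw [← Module.Basis.sum_repr (bb K) x]
    rw [map_sum]
    congr 1; funext k
    rw [map_rat_smul]
  have hM : (Matrix.of fun i j =>
      ∑ k, (((Algebra.leftMulMatrix (bb K) ((bb K) k)) i j : ℚ) : ℝ) * cx K x k)
      = (Rat.castHom ℝ).mapMatrix ((Algebra.leftMulMatrix (bb K)) x) := by
    ext i j
    rw [hx]
    simp only [RingHom.mapMatrix_apply, Matrix.map_apply, Matrix.sum_apply,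
      Matrix.smul_apply, Matrix.of_apply, smul_eq_mul, map_sum, map_mul,
      Rat.coe_castHom]
    refine Finset.sum_congr rfl fun k _ => ?_
    rw [cx]
    push_cast
    ring
  rw [normPoly, hM, ← RingHom.map_det, Algebra.norm_eq_matrix_det (bb K) x]
  rfl

variable {K}

/-- gate: the norm equals a given rational -/
lemma gate_norm (r : ℚ) :
    GateFor K (fun y => dzR (normPoly K y - r)) (fun x => Algebra.norm ℚ x = r) := by
  constructor
  · exact isGP_dzR (isGP_sub (isGP_normPoly K) (IsGP.const _))
  · intro x
    show dzR (normPoly K (cx K x) - r) = _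
    rw [normPoly_cx]
    have h1 : ((Algebra.norm ℚ x : ℚ) : ℝ) - (r : ℝ) = ((Algebra.norm ℚ x - r : ℚ) : ℝ) := by
      push_cast; ring
    rw [h1, dzR_rat]
    by_cases h : Algebra.norm ℚ x = r
    · rw [if_pos (by rw [h, sub_self]), if_pos h]
    · rw [if_neg (fun hc => h (by linarith [sub_eq_zero.mp hc])), if_neg h]

end Main4

section Main5

open GPAux NumberField
open scoped Classical

variable (K : IntermediateField ℚ ℝ) [NumberField ↥K]

/-- all embeddings other than the inclusion -/
noncomputable def TT : Finset (↥K →ₐ[ℚ] ℂ) := Finset.univ.erase (iotaC K)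

/-- the product of the other conjugates of `x` -/
noncomputable def zre (x : ↥K) : ℝ := (∏ σ ∈ TT K, σ x).re

/-- the product of the other conjugates, in coordinates -/
noncomputable def zPoly : (Fin (nn K) → ℝ) → ℂ := fun y =>
  ∏ σ ∈ TT K, ((reL σ y : ℝ) + (imL σ y : ℝ) * Complex.I)

lemma isGP_zPolyRe : IsGP (fun y => (zPoly K y).re) := by
  refine (isGP_cprod (TT K) _ fun σ _ => ⟨?_, ?_⟩).1
  · have h : (fun y => (((reL σ y : ℝ) : ℂ) + (imL σ y : ℝ) * Complex.I).re)
        = fun y => reL (K := K) σ y := by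
      funext y; simp
    rw [h]; exact isGP_reL σ
  · have h : (fun y => (((reL σ y : ℝ) : ℂ) + (imL σ y : ℝ) * Complex.I).im)
        = fun y => imL (K := K) σ y := by
      funext y; simp
    rw [h]; exact isGP_imL σ

lemma zPoly_cx (x : ↥K) : (zPoly K (cx K x)).re = zre K x := by
  rw [zPoly, zre]
  congr 1
  refine Finset.prod_congr rfl fun σ _ => ?_
  rw [reL_cx, imL_cx, Complex.re_add_im]

variable {K}

/-- gate: `zre ∈ (0,1)` -/
lemma gate_zPos : GateFor K (fun y => gate01 (2 * (zPoly K y).re - 1))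
    (fun x => 0 < zre K x ∧ zre K x < 1) := by
  constructor
  · exact isGP_gate01 (isGP_sub (IsGP.mul (IsGP.const 2) (isGP_zPolyRe K)) (IsGP.const 1))
  · intro x
    show gate01 (2 * (zPoly K (cx K x)).re - 1) = _
    rw [zPoly_cx, gate01_eq]
    by_cases h : 0 < zre K x ∧ zre K x < 1
    · rw [if_pos ⟨by linarith [h.1], by linarith [h.2]⟩, if_pos h]
    · rw [if_neg, if_neg h]
      rintro ⟨h1, h2⟩
      exact h ⟨by linarith, by linarith⟩

/-- gate: `zre ∈ (-1,0)` -/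
lemma gate_zNeg : GateFor K (fun y => gate01 (2 * (zPoly K y).re + 1))
    (fun x => -1 < zre K x ∧ zre K x < 0) := by
  constructor
  · exact isGP_gate01 (IsGP.add (IsGP.mul (IsGP.const 2) (isGP_zPolyRe K)) (IsGP.const 1))
  · intro x
    show gate01 (2 * (zPoly K (cx K x)).re + 1) = _
    rw [zPoly_cx, gate01_eq]
    by_cases h : -1 < zre K x ∧ zre K x < 0
    · rw [if_pos ⟨by linarith [h.1], by linarith [h.2]⟩, if_pos h]
    · rw [if_neg, if_neg h]
      rintro ⟨h1, h2⟩
      exact h ⟨by linarith, by linarith⟩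

end Main5

section NT

open GPAux NumberField
open scoped Classical

variable {K : IntermediateField ℚ ℝ} [NumberField ↥K]

lemma bb_apply (i : Fin (nn K)) :
    (bb K) i = algebraMap (𝓞 ↥K) ↥K
      ((RingOfIntegers.basis ↥K) ((Fintype.equivFin _).symm i)) := by
  erw [bb, Module.Basis.reindex_apply, NumberField.integralBasis_apply]
  rfl

/-- integrality is equivalent to integer coordinates -/
lemma intCoords_iff (x : ↥K) :
    (∀ i, ∃ m : ℤ, (bb K).repr x i = m) ↔ IsIntegral ℤ x := by
  constructor
  · intro h
    have hx : x ∈ Submodule.span ℤ (Set.range (NumberField.integralBasis ↥K)) := by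
      have hsum : x = ∑ i, (bb K).repr x i • (bb K) i := (Module.Basis.sum_repr (bb K) x).symm
      rw [hsum]
      refine Submodule.sum_mem _ fun i _ => ?_
      obtain ⟨m, hm⟩ := h i
      rw [hm, Int.cast_smul_eq_zsmul]
      refine Submodule.smul_mem _ m (Submodule.subset_span ?_)
      erw [bb, Module.Basis.reindex_apply]
      exact Set.mem_range_self _
    rw [NumberField.mem_span_integralBasis] at hx
    obtain ⟨y, hy⟩ := hx
    rw [← hy]
    exact RingOfIntegers.isIntegral_coe y
  · intro hx
    intro i
    have h1 : (bb K).repr x i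
        = (NumberField.integralBasis ↥K).repr x ((Fintype.equivFin _).symm i) := by
      erw [bb, Module.Basis.repr_reindex_apply]
    have h2 : x = algebraMap (𝓞 ↥K) ↥K ⟨x, hx⟩ := rfl
    erw [h1, h2, NumberField.integralBasis_repr_apply]
    exact ⟨_, rfl⟩

lemma prod_embeddings (x : ↥K) :
    ∏ σ : ↥K →ₐ[ℚ] ℂ, σ x = (((Algebra.norm ℚ x : ℚ) : ℝ) : ℂ) := by
  rw [← Algebra.norm_eq_prod_embeddings ℚ ℂ x]
  push_cast
  rfl

lemma zre_eq (x : ↥K) (hx : x ≠ 0) :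
    zre K x = ((Algebra.norm ℚ x : ℚ) : ℝ) / (x : ℝ) := by
  have hι : iotaC K x ≠ 0 := by
    rw [iotaC_apply]
    simp only [ne_eq, Complex.ofReal_eq_zero]
    exact fun hc => hx (by exact_mod_cast Subtype.ext hc)
  have h1 : iotaC K x * ∏ σ ∈ TT K, σ x = (((Algebra.norm ℚ x : ℚ) : ℝ) : ℂ) := by
    rw [TT, show iotaC K x * ∏ σ ∈ Finset.univ.erase (iotaC K), σ x
        = ∏ σ : ↥K →ₐ[ℚ] ℂ, σ x from
      Finset.mul_prod_erase Finset.univ (fun σ => σ x) (Finset.mem_univ (iotaC K)),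
      prod_embeddings]
  have h2 : ∏ σ ∈ TT K, σ x = (((Algebra.norm ℚ x : ℚ) : ℝ) : ℂ) / iotaC K x := by
    field_simp at h1 ⊢
    linear_combination h1
  rw [zre, h2, iotaC_apply]
  rw [show (((Algebra.norm ℚ x : ℚ) : ℝ) : ℂ) / (((x : ℝ) : ℝ) : ℂ)
      = (((Algebra.norm ℚ x : ℚ) : ℝ) / (x : ℝ) : ℝ) from by push_cast; ring]
  exact Complex.ofReal_re _

omit [NumberField ↥K] in
lemma minpoly_coe (x : ↥K) : minpoly ℚ ((x : ℝ)) = minpoly ℚ x :=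
  minpoly.algebraMap_eq (algebraMap ↥K ℝ).injective x

lemma root_iff (x : ↥K) (α : ℂ) :
    aeval α (minpoly ℚ x) = 0 ↔ ∃ σ : ↥K →ₐ[ℚ] ℂ, σ x = α := by
  constructor
  · intro h
    have hmem : α ∈ (minpoly ℚ x).rootSet ℂ :=
      Polynomial.mem_rootSet.mpr ⟨minpoly.ne_zero (IsIntegral.of_finite ℚ x), h⟩
    rw [← NumberField.Embeddings.range_eval_eq_rootSet_minpoly ↥K ℂ x] at hmem
    obtain ⟨σ, hσ⟩ := hmem
    exact ⟨σ.toRatAlgHom, hσ⟩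
  · rintro ⟨σ, rfl⟩
    rw [Polynomial.aeval_algHom_apply σ x (minpoly ℚ x), minpoly.aeval, map_zero]

end NT

section NT2

open GPAux NumberField
open scoped Classical

variable {K : IntermediateField ℚ ℝ} [NumberField ↥K]

lemma inv_integral_of_gates (x : ↥K) (hx : IsIntegral ℤ x)
    (hN : Algebra.norm ℚ x = 1 ∨ Algebra.norm ℚ x = -1) (hx0 : x ≠ 0) :
    IsIntegral ℤ (x⁻¹ : ↥K) := by
  have hι : iotaC K x ≠ 0 := by
    rw [iotaC_apply]
    simp only [ne_eq, Complex.ofReal_eq_zero]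
    exact fun hc => hx0 (by exact_mod_cast Subtype.ext hc)
  have h1 : iotaC K x * ∏ σ ∈ TT K, σ x = (((Algebra.norm ℚ x : ℚ) : ℝ) : ℂ) := by
    rw [TT, show iotaC K x * ∏ σ ∈ Finset.univ.erase (iotaC K), σ x
        = ∏ σ : ↥K →ₐ[ℚ] ℂ, σ x from
      Finset.mul_prod_erase Finset.univ (fun σ => σ x) (Finset.mem_univ (iotaC K)),
      prod_embeddings]
  -- `ι (x⁻¹) = (N x : ℂ) * ∏_{σ ∈ TT} σ x` since `(N x)² = 1`
  have hNsq : (((Algebra.norm ℚ x : ℚ) : ℝ) : ℂ) * (((Algebra.norm ℚ x : ℚ) : ℝ) : ℂ) = 1 := by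
    rcases hN with h | h <;> rw [h] <;> norm_num
  have hmul1 : iotaC K x * ((((Algebra.norm ℚ x : ℚ) : ℝ) : ℂ) * ∏ σ ∈ TT K, σ x) = 1 := by
    calc iotaC K x * ((((Algebra.norm ℚ x : ℚ) : ℝ) : ℂ) * ∏ σ ∈ TT K, σ x)
        = (((Algebra.norm ℚ x : ℚ) : ℝ) : ℂ) * (iotaC K x * ∏ σ ∈ TT K, σ x) := by ring
      _ = (((Algebra.norm ℚ x : ℚ) : ℝ) : ℂ) * (((Algebra.norm ℚ x : ℚ) : ℝ) : ℂ) := by rw [h1]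
      _ = 1 := hNsq
  have hinv : iotaC K (x⁻¹) = (((Algebra.norm ℚ x : ℚ) : ℝ) : ℂ) * ∏ σ ∈ TT K, σ x := by
    rw [map_inv₀]
    exact inv_eq_of_mul_eq_one_right hmul1
  have hmem : iotaC K (x⁻¹) ∈ integralClosure ℤ ℂ := by
    rw [hinv]
    refine Subalgebra.mul_mem _ ?_ (Subalgebra.prod_mem _ fun σ _ => ?_)
    · rcases hN with h | h <;> rw [h]
      · push_cast; exact Subalgebra.one_mem _
      · push_cast; exact Subalgebra.neg_mem _ (Subalgebra.one_mem _)
    · exact IsIntegral.map (σ.toRingHom.toIntAlgHom) hx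
  have hC : IsIntegral ℤ (iotaC K (x⁻¹)) := hmem
  have hR : IsIntegral ℤ (((x⁻¹ : ↥K) : ℝ)) := by
    have h2 : iotaC K (x⁻¹) = algebraMap ℝ ℂ (((x⁻¹ : ↥K) : ℝ)) := rfl
    rw [h2] at hC
    exact (isIntegral_algebraMap_iff (algebraMap ℝ ℂ).injective).mp hC
  have h3 : ((x⁻¹ : ↥K) : ℝ) = algebraMap ↥K ℝ (x⁻¹) := rfl
  rw [h3] at hR
  exact (isIntegral_algebraMap_iff (algebraMap ↥K ℝ).injective).mp hR

lemma norm_pm_one_of_unit (x : ↥K) (hx : IsIntegral ℤ x)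
    (hxinv : IsIntegral ℤ (x⁻¹ : ↥K)) (hx0 : x ≠ 0) :
    Algebra.norm ℚ x = 1 ∨ Algebra.norm ℚ x = -1 := by
  have h1 : IsIntegral ℤ (Algebra.norm ℚ x) := Algebra.isIntegral_norm ℚ hx
  have h2 : IsIntegral ℤ (Algebra.norm ℚ (x⁻¹ : ↥K)) := Algebra.isIntegral_norm ℚ hxinv
  obtain ⟨m, hm⟩ := IsIntegrallyClosed.isIntegral_iff.mp h1
  obtain ⟨m', hm'⟩ := IsIntegrallyClosed.isIntegral_iff.mp h2
  have hmul : Algebra.norm ℚ x * Algebra.norm ℚ (x⁻¹ : ↥K) = 1 := by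
    rw [← map_mul, mul_inv_cancel₀ hx0, map_one]
  have hm2 : (m : ℚ) = Algebra.norm ℚ x := by simpa using hm
  have hm2' : (m' : ℚ) = Algebra.norm ℚ (x⁻¹ : ↥K) := by simpa using hm'
  have hmm' : m * m' = 1 := by
    have hq : (m : ℚ) * (m' : ℚ) = 1 := by rw [hm2, hm2']; exact hmul
    exact_mod_cast hq
  rcases Int.mul_eq_one_iff_eq_one_or_neg_one.mp hmm' with ⟨h, _⟩ | ⟨h, _⟩
  · left; rw [← hm2, h]; norm_num
  · right; rw [← hm2, h]; norm_num

end NT2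

section NT3

open GPAux NumberField
open scoped Classical

variable {K : IntermediateField ℚ ℝ} [NumberField ↥K]

lemma pisot_iff_gates (x : ↥K) :
    ((∀ i ∈ (Finset.univ : Finset (Fin (nn K))), ∃ m : ℤ, (bb K).repr x i = m) ∧
     ((∀ σ ∈ TT K, σ x = iotaC K x ∨ Complex.normSq (σ x) < 1) ∧
      ((Algebra.norm ℚ x = 1 ∧ (0 < zre K x ∧ zre K x < 1)) ∨
       (Algebra.norm ℚ x = -1 ∧ (-1 < zre K x ∧ zre K x < 0)))))
    ↔ IsPisotUnit ((x : ℝ)) := by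
  constructor
  · rintro ⟨hA, hC, hD⟩
    have hxInt : IsIntegral ℤ x := (intCoords_iff x).mp (fun i => hA i (Finset.mem_univ i))
    have hN : Algebra.norm ℚ x = 1 ∨ Algebra.norm ℚ x = -1 :=
      hD.elim (fun h => Or.inl h.1) (fun h => Or.inr h.1)
    have hx0 : x ≠ 0 := by
      rintro rfl
      rw [Algebra.norm_zero] at hN
      rcases hN with h | h <;> norm_num at h
    have hz := zre_eq x hx0
    have hgt : 1 < (x : ℝ) := by
      rcases hD with ⟨hN1, hz1, hz2⟩ | ⟨hN1, hz1, hz2⟩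
      · rw [hz, hN1] at hz1 hz2
        push_cast at hz1 hz2
        have hxpos : (0 : ℝ) < (x : ℝ) := one_div_pos.mp hz1
        exact (div_lt_one hxpos).mp hz2
      · rw [hz, hN1] at hz1 hz2
        push_cast at hz1 hz2
        have h1 : (0 : ℝ) < 1 / (x : ℝ) := by
          have h3 : (-1 : ℝ) / (x : ℝ) = -(1 / (x : ℝ)) := by ring
          rw [h3] at hz2
          linarith
        have hxpos : (0 : ℝ) < (x : ℝ) := one_div_pos.mp h1
        have h2 : (1 : ℝ) / (x : ℝ) < 1 := by
          have h3 : (-1 : ℝ) / (x : ℝ) = -(1 / (x : ℝ)) := by ring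
          rw [h3] at hz1
          linarith
        exact (div_lt_one hxpos).mp h2
    have hxinvInt : IsIntegral ℤ (x⁻¹ : ↥K) := inv_integral_of_gates x hxInt hN hx0
    refine ⟨⟨?_, hgt, ?_⟩, ?_⟩
    · exact (isIntegral_algebraMap_iff (algebraMap ↥K ℝ).injective).mpr hxInt
    · intro α hroot hne
      rw [minpoly_coe] at hroot
      obtain ⟨σ, rfl⟩ := (root_iff x α).mp hroot
      by_cases hσ : σ = iotaC K
      · exact absurd (by rw [hσ, iotaC_apply]) hne
      · have hσT : σ ∈ TT K := Finset.mem_erase.mpr ⟨hσ, Finset.mem_univ σ⟩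
        rcases hC σ hσT with h | h
        · exact absurd (by rw [h, iotaC_apply]) hne
        · have h1 : ‖σ x‖ ^ 2 < 1 := by rw [Complex.sq_norm]; exact h
          nlinarith [norm_nonneg (σ x)]
    · rw [← IntermediateField.coe_inv K x]
      exact (isIntegral_algebraMap_iff (algebraMap ↥K ℝ).injective).mpr hxinvInt
  · rintro ⟨⟨hInt, hgt, hconj⟩, hinv⟩
    have hxInt : IsIntegral ℤ x :=
      (isIntegral_algebraMap_iff (algebraMap ↥K ℝ).injective).mp hInt
    have hx0 : x ≠ 0 := by
      rintro rfl
      norm_num at hgt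
    have hxinvInt : IsIntegral ℤ (x⁻¹ : ↥K) := by
      rw [← IntermediateField.coe_inv K x] at hinv
      exact (isIntegral_algebraMap_iff (algebraMap ↥K ℝ).injective).mp hinv
    have hN := norm_pm_one_of_unit x hxInt hxinvInt hx0
    refine ⟨fun i _ => (intCoords_iff x).mpr hxInt i, ?_, ?_⟩
    · intro σ hσT
      by_cases heq : σ x = iotaC K x
      · exact Or.inl heq
      · refine Or.inr ?_
        have hroot : aeval (σ x) (minpoly ℚ ((x : ℝ))) = 0 := by
          rw [minpoly_coe]
          exact (root_iff x (σ x)).mpr ⟨σ, rfl⟩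
        have hne : σ x ≠ (((x : ℝ)) : ℂ) := by
          rw [← iotaC_apply]; exact heq
        have habs := hconj (σ x) hroot hne
        have h1 : Complex.normSq (σ x) = ‖σ x‖ ^ 2 := (Complex.sq_norm _).symm
        rw [h1]
        nlinarith [norm_nonneg (σ x)]
    · have hz := zre_eq x hx0
      have hxpos : (0 : ℝ) < (x : ℝ) := by linarith
      rcases hN with h | h
      · left
        refine ⟨h, ?_, ?_⟩
        · rw [hz, h]; push_cast; positivity
        · rw [hz, h]; push_cast; exact (div_lt_one hxpos).mpr hgt
      · right
        refine ⟨h, ?_, ?_⟩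
        · rw [hz, h]
          push_cast
          have h2 : (-1 : ℝ) / (x : ℝ) = -(1 / (x : ℝ)) := by ring
          rw [h2]
          have : (1 : ℝ) / (x : ℝ) < 1 := (div_lt_one hxpos).mpr hgt
          linarith
        · rw [hz, h]
          push_cast
          have h2 : (-1 : ℝ) / (x : ℝ) = -(1 / (x : ℝ)) := by ring
          rw [h2]
          have : (0 : ℝ) < 1 / (x : ℝ) := by positivity
          linarith

end NT3

section Final

open GPAux NumberField
open scoped Classical

variable {K : IntermediateField ℚ ℝ} [NumberField ↥K]

lemma gateable_pisot : Gateable K (fun x => IsPisotUnit ((x : ℝ))) := by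
  have gA : Gateable K (fun x => ∀ i ∈ (Finset.univ : Finset (Fin (nn K))),
      ∃ m : ℤ, (bb K).repr x i = m) :=
    Gateable.finprod Finset.univ _ (fun i _ => (gate_intCoord i).gateable)
  have gC : Gateable K (fun x => ∀ σ ∈ TT K,
      σ x = iotaC K x ∨ Complex.normSq (σ x) < 1) :=
    Gateable.finprod (TT K) _ (fun σ _ => (gate_eqId σ).or (gate_sq σ).gateable)
  have gD1 : Gateable K (fun x => Algebra.norm ℚ x = 1 ∧ (0 < zre K x ∧ zre K x < 1)) :=
    (gate_norm 1).gateable.and gate_zPos.gateable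
  have gD2 : Gateable K (fun x => Algebra.norm ℚ x = -1 ∧ (-1 < zre K x ∧ zre K x < 0)) :=
    (gate_norm (-1)).gateable.and gate_zNeg.gateable
  exact ((gA.and ((gC.and (gD1.or gD2)))).congr (fun x => pisot_iff_gates x))

end Final


/-- for a number field `K ⊆ ℝ`, the set of Pisot units in `K` is a
generalised polynomial subset of `K`. -/
theorem stmt8 (K : IntermediateField ℚ ℝ) [FiniteDimensional ℚ K] :
    IsGPSet {x : K | IsPisotUnit (x : ℝ)} := by
  haveI : NumberField ↥K := ⟨⟩
  obtain ⟨g, hg, hval⟩ := gateable_pisot (K := K)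
  refine ⟨nn K, bb K, g, hg, fun x => ?_⟩
  have h := hval x
  have hcx : (fun i => (((bb K).repr x) i : ℝ)) = cx K x := rfl
  classical
  rw [Set.indicator_apply, hcx, h]
  by_cases hx : IsPisotUnit ((x : ℝ))
  · rw [if_pos hx, if_pos (by exact hx)]
  · rw [if_neg hx, if_neg (by exact hx)]
end

section
/- Let β ∈ ℂ be an algebraic number of degree m over ℚ, let K = ℚ(β), and let (n_i)_{i≥0} be a linear recurrent sequence of rational numbers whose characteristic polynomial is the minimal polynomial of β over ℚ. Then there exists a unique x ∈ K such that n_i = Tr_{K/ℚ}(β^i · x) for all i ≥ 0, where Tr_{K/ℚ} denotes the field trace of K over ℚ. -/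
open Polynomial IntermediateField

/-- a rational linear recurrent sequence with characteristic polynomial
the minimal polynomial of `β` is of the form `n_i = Tr_{K/ℚ}(β^i x)` for a unique
`x ∈ K = ℚ(β)`. -/
theorem stmt11 (β : ℂ) (hβ : IsAlgebraic ℚ β)
    (n : ℕ → ℚ) (hn : IsLinRec (minpoly ℚ β) n) :
    ∃! x : ℚ⟮β⟯, ∀ i : ℕ,
      n i = Algebra.trace ℚ ℚ⟮β⟯ ((AdjoinSimple.gen ℚ β) ^ i * x) := by
  classical
  have hint : IsIntegral ℚ β := hβ.isIntegral
  set K := ℚ⟮β⟯ with hK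
  set g : K := AdjoinSimple.gen ℚ β with hg
  set p : ℚ[X] := minpoly ℚ β with hp
  set m : ℕ := p.natDegree with hm
  have hFD : FiniteDimensional ℚ K := IntermediateField.adjoin.finiteDimensional hint
  let pb : PowerBasis ℚ K := IntermediateField.adjoin.powerBasis hint
  -- g^m in terms of lower powers
  have haev : aeval g p = 0 := IntermediateField.aeval_gen_minpoly ℚ β
  have hmonic : p.Monic := minpoly.monic hint
  have hgpow : g ^ m = ∑ j ∈ Finset.range m, (-(p.coeff j)) • g ^ j := by
    have h1 : aeval g p = ∑ i ∈ Finset.range (m + 1), p.coeff i • g ^ i :=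
      Polynomial.aeval_eq_sum_range (p := p) g
    rw [Finset.sum_range_succ] at h1
    have h2 : (0 : K) = (∑ i ∈ Finset.range m, p.coeff i • g ^ i) + p.coeff m • g ^ m := by
      rw [← h1, haev]
    have h3 : p.coeff m = 1 := hmonic.coeff_natDegree
    rw [h3, one_smul] at h2
    have := eq_neg_of_add_eq_zero_right h2.symm
    rw [this, ← Finset.sum_neg_distrib]
    exact Finset.sum_congr rfl (fun j _ => (neg_smul _ _).symm)
  -- trace recurrence
  have htr : ∀ (x : K) (k : ℕ),
      Algebra.trace ℚ K (g ^ (k + m) * x)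
        = ∑ j ∈ Finset.range m, (-(p.coeff j)) * Algebra.trace ℚ K (g ^ (k + j) * x) := by
    intro x k
    have : g ^ (k + m) * x = ∑ j ∈ Finset.range m, (-(p.coeff j)) • (g ^ (k + j) * x) := by
      rw [pow_add, hgpow, Finset.mul_sum, Finset.sum_mul]
      refine Finset.sum_congr rfl (fun j _ => ?_)
      rw [Algebra.mul_smul_comm, Algebra.smul_mul_assoc, pow_add]
    rw [this, map_sum]
    refine Finset.sum_congr rfl (fun j _ => ?_)
    rw [map_smul, smul_eq_mul]
  -- the linear map x ↦ (Tr(g^i x))_{i < m}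
  let T : K →ₗ[ℚ] (Fin m → ℚ) :=
    { toFun := fun x i => Algebra.trace ℚ K (g ^ (i : ℕ) * x)
      map_add' := by
        intro x y; funext i; simp [mul_add]
      map_smul' := by
        intro c x; funext i; simp [mul_smul_comm] }
  have hinj : Function.Injective T := by
    rw [← LinearMap.ker_eq_bot, LinearMap.ker_eq_bot']
    intro x hx
    refine (traceForm_nondegenerate ℚ K).1 x (fun y => ?_)
    have hzero : ∀ y : K, (Algebra.traceForm ℚ K x) y = 0 := by
      have hb : ∀ i : Fin pb.dim, (Algebra.traceForm ℚ K x) (pb.basis i) = 0 := by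
        intro i
        have hdim : pb.dim = m := rfl
        have hgen : pb.gen = g := rfl
        have hi : (i : ℕ) < m := hdim ▸ i.2
        have := congrFun hx ⟨(i : ℕ), hi⟩
        simp only [Pi.zero_apply] at this
        rw [pb.basis_eq_pow, hgen, Algebra.traceForm_apply, mul_comm]
        exact this
      intro y
      have := pb.basis.sum_repr y
      rw [← this, map_sum]
      simp only [map_smul, smul_eq_mul]
      exact Finset.sum_eq_zero (fun i _ => by rw [hb i, mul_zero])
    exact hzero y
  have hsurj : Function.Surjective T := by
    refine (LinearMap.injective_iff_surjective_of_finrank_eq_finrank ?_).mp hinj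
    rw [IntermediateField.adjoin.finrank hint, Module.finrank_fin_fun]
  obtain ⟨x, hx⟩ := hsurj (fun i => n (i : ℕ))
  have key : ∀ i : ℕ, n i = Algebra.trace ℚ K (g ^ i * x) := by
    intro i
    induction i using Nat.strong_induction_on with
    | _ i ih =>
      rcases lt_or_ge i m with h | h
      · have := congrFun hx ⟨i, h⟩
        exact this.symm
      · obtain ⟨k, rfl⟩ := Nat.exists_eq_add_of_le h
        rw [add_comm m k, htr x k, hn k]
        refine Finset.sum_congr rfl (fun j hj => ?_)
        rw [ih (k + j) (by
          have := Finset.mem_range.mp hj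
          omega)]
  refine ⟨x, key, fun y hy => hinj ?_⟩
  funext i
  show Algebra.trace ℚ K (g ^ (i : ℕ) * y) = Algebra.trace ℚ K (g ^ (i : ℕ) * x)
  rw [← hy (i : ℕ), key (i : ℕ)]
end

section
/- Let β be a Pisot number and let (n_i)_{i≥0} be an integer-valued sequence satisfying a linear recurrence whose characteristic polynomial is the minimal polynomial of β over ℚ. Then for every j ∈ ℕ₀ there exists i₀ ∈ ℕ₀ such that for all integers i ≥ i₀ one has n_{i+j} = ⌊β^j · n_i + 1/2⌋, i.e. n_{i+j} is the nearest integer to β^j · n_i. -/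
open Polynomial IntermediateField

set_option maxHeartbeats 1000000 in
theorem stmt12' (β : ℝ) (hβ : (IsIntegral ℤ β ∧ 1 < β ∧
    ∀ α : ℂ, aeval α (minpoly ℚ β) = 0 → α ≠ (β : ℂ) → ‖α‖ < 1)) (n : ℕ → ℤ)
    (hn : ∀ i : ℕ, ((n (i + (minpoly ℚ β).natDegree) : ℚ)) =
      ∑ j ∈ Finset.range (minpoly ℚ β).natDegree,
        (-((minpoly ℚ β).coeff j)) * (n (i + j) : ℚ)) :
    ∀ j : ℕ, ∃ i₀ : ℕ, ∀ i : ℕ, i₀ ≤ i →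
      n (i + j) = ⌊β ^ j * (n i : ℝ) + 1 / 2⌋ := by
  have hβi : IsIntegral ℚ β := hβ.1.tower_top
  set p : ℚ[X] := minpoly ℚ β with hp
  set m : ℕ := p.natDegree with hm
  set K : IntermediateField ℚ ℝ := ℚ⟮β⟯ with hK
  haveI : FiniteDimensional ℚ K := adjoin.finiteDimensional hβi
  set b : K := AdjoinSimple.gen ℚ β with hbdef
  have hbmap : algebraMap K ℝ b = β := AdjoinSimple.algebraMap_gen ℚ β
  have hminb : minpoly ℚ b = p := by
    rw [hp, ← hbmap, minpoly.algebraMap_eq (algebraMap K ℝ).injective]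
  have hbint : IsIntegral ℚ b := IsIntegral.of_finite ℚ b
  set pb : PowerBasis ℚ K := adjoin.powerBasis hβi with hpb
  have hpbgen : pb.gen = b := adjoin.powerBasis_gen hβi
  have hpbdim : pb.dim = m := by
    rw [hpb]
    simp [adjoin.powerBasis, hminb]
    rfl
  -- b ^ m = ∑ j < m, (-(p.coeff j)) • b ^ j
  have hbm : b ^ m = ∑ j ∈ Finset.range m, (-(p.coeff j)) • b ^ j := by
    have h0 : aeval b p = 0 := by rw [← hminb]; exact minpoly.aeval ℚ b
    have hmon : p.Monic := minpoly.monic hβi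
    have := aeval_eq_sum_range (p := p) b
    rw [h0, Finset.sum_range_succ, hmon.coeff_natDegree, one_smul] at this
    have : b ^ m = -∑ i ∈ Finset.range m, p.coeff i • b ^ i := by
      rw [eq_neg_iff_add_eq_zero, add_comm]; exact this.symm
    rw [this, ← Finset.sum_neg_distrib]
    exact Finset.sum_congr rfl fun j _ => by rw [neg_smul]
  -- the linear map λ ↦ (Tr(λ b^k))_{k < m}
  set T : K →ₗ[ℚ] (Fin m → ℚ) :=
    { toFun := fun l k => Algebra.trace ℚ K (l * b ^ (k : ℕ))
      map_add' := by intro x y; funext k; simp [add_mul]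
      map_smul' := by intro c x; funext k; simp [smul_mul_assoc] } with hT
  have hTinj : Function.Injective T := by
    rw [← LinearMap.ker_eq_bot, LinearMap.ker_eq_bot']
    intro l hl
    have hl' : ∀ k : Fin m, Algebra.trace ℚ K (l * b ^ (k : ℕ)) = 0 := fun k =>
      congrFun hl k
    refine (traceForm_nondegenerate ℚ K).1 l ?_
    have hx : Algebra.traceForm ℚ K l = 0 := by
      refine pb.basis.ext fun i => ?_
      rw [PowerBasis.basis_eq_pow, hpbgen]
      simpa [Algebra.traceForm_apply] using hl' ⟨i, by omega⟩
    intro x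
    rw [hx]
    rfl
  have hTsurj : Function.Surjective T := by
    refine (LinearMap.injective_iff_surjective_of_finrank_eq_finrank ?_).mp hTinj
    rw [Module.finrank_fin_fun, adjoin.finrank hβi]
  obtain ⟨l, hl⟩ := hTsurj (fun k => (n (k : ℕ) : ℚ))
  -- the trace sequence
  set u : ℕ → ℚ := fun i => Algebra.trace ℚ K (l * b ^ i) with hu
  have hurec : ∀ i : ℕ, u (i + m) = ∑ j ∈ Finset.range m, (-(p.coeff j)) * u (i + j) := by
    intro i
    have : l * b ^ (i + m) = ∑ j ∈ Finset.range m, (-(p.coeff j)) • (l * b ^ (i + j)) := by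
      rw [pow_add, hbm, Finset.mul_sum, Finset.mul_sum]
      refine Finset.sum_congr rfl fun j _ => ?_
      simp only [Algebra.smul_def, pow_add]
      ring
    rw [hu]; simp only [this, map_sum, map_smul]
    exact Finset.sum_congr rfl fun j _ => by simp [smul_eq_mul]
  have huinit : ∀ k : ℕ, k < m → u k = (n k : ℚ) := by
    intro k hk
    have := congrFun hl ⟨k, hk⟩
    simpa [hT, hu] using this
  have key : ∀ i : ℕ, (n i : ℚ) = u i := by
    intro i
    induction i using Nat.strong_induction_on with
    | _ i ih =>
      rcases lt_or_ge i m with h | h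
      · exact (huinit i h).symm
      · obtain ⟨i', rfl⟩ : ∃ i', i = i' + m := ⟨i - m, (Nat.sub_add_cancel h).symm⟩
        rw [hn i', hurec i']
        refine Finset.sum_congr rfl fun j hj => ?_
        rw [ih (i' + j) (by have := Finset.mem_range.mp hj; omega)]
  -- complex embeddings
  have hC : ∀ i : ℕ, (n i : ℂ) = ∑ σ : K →ₐ[ℚ] ℂ, σ l * (σ b) ^ i := by
    intro i
    have h1 : algebraMap ℚ ℂ (u i) = ∑ σ : K →ₐ[ℚ] ℂ, σ (l * b ^ i) :=
      trace_eq_sum_embeddings ℂ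
    have h2 : algebraMap ℚ ℂ (u i) = (n i : ℂ) := by
      rw [← key i, eq_ratCast, Rat.cast_intCast]
    rw [← h2, h1]
    exact Finset.sum_congr rfl fun σ _ => by rw [map_mul, map_pow]
  set σ₀ : K →ₐ[ℚ] ℂ :=
    (Complex.ofRealAm.restrictScalars ℚ).comp (IsScalarTower.toAlgHom ℚ K ℝ) with hσ₀
  have hσ₀b : σ₀ b = (β : ℂ) := by
    simp [hσ₀, hbmap]
  have habs : ∀ σ : K →ₐ[ℚ] ℂ, σ ≠ σ₀ → ‖σ b‖ < 1 := by
    intro σ hσ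
    refine hβ.2.2 (σ b) ?_ ?_
    · rw [← hminb, aeval_algHom_apply, minpoly.aeval, map_zero]
    · intro hcontra
      exact hσ (pb.algHom_ext (by rw [hpbgen, hcontra, hσ₀b]))
  intro j
  -- the error term
  set F : ℕ → ℂ := fun i => ∑ σ : K →ₐ[ℚ] ℂ, σ l * ((σ b) ^ j - (β : ℂ) ^ j) * (σ b) ^ i
    with hF
  have hFeq : ∀ i : ℕ, ((n (i + j) : ℂ)) - (β : ℂ) ^ j * (n i : ℂ) = F i := by
    intro i
    rw [hC, hC, hF, Finset.mul_sum, ← Finset.sum_sub_distrib]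
    refine Finset.sum_congr rfl fun σ _ => ?_
    rw [pow_add]; ring
  have hF0 : Filter.Tendsto F Filter.atTop (nhds 0) := by
    rw [hF]
    have : (0 : ℂ) = ∑ σ : K →ₐ[ℚ] ℂ, 0 := by simp
    rw [this]
    refine tendsto_finset_sum _ fun σ _ => ?_
    rcases eq_or_ne σ σ₀ with rfl | hσ
    · simpa [hσ₀b] using tendsto_const_nhds
    · have h1 : Filter.Tendsto (fun i : ℕ => (σ b) ^ i) Filter.atTop (nhds 0) :=
        tendsto_pow_atTop_nhds_zero_of_norm_lt_one (by
          simpa using habs σ hσ)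
      simpa using h1.const_mul (σ l * ((σ b) ^ j - (β : ℂ) ^ j))
  obtain ⟨i₀, hi₀⟩ := (Metric.tendsto_atTop.mp hF0) (1/2) (by norm_num)
  refine ⟨i₀, fun i hi => ?_⟩
  have hsmall : |(n (i + j) : ℝ) - β ^ j * (n i : ℝ)| < 1 / 2 := by
    have h1 := hi₀ i hi
    rw [dist_zero_right, ← hFeq i] at h1
    have h2 : ((n (i + j) : ℂ)) - (β : ℂ) ^ j * (n i : ℂ) =
        (((n (i + j) : ℝ) - β ^ j * (n i : ℝ) : ℝ) : ℂ) := by push_cast; ring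
    rw [h2, Complex.norm_real, Real.norm_eq_abs] at h1
    exact h1
  rw [abs_lt] at hsmall
  rw [eq_comm, Int.floor_eq_iff]
  constructor
  · push_cast; linarith [hsmall.2]
  · push_cast; linarith [hsmall.1]

/-- for a Pisot number `β` and an integer-valued linear recurrent
sequence with characteristic polynomial the minimal polynomial of `β`, for each `j`
and all sufficiently large `i`, `n_{i+j}` is the nearest integer to `β^j n_i`. -/
theorem stmt12 (β : ℝ) (hβ : IsPisot β) (n : ℕ → ℤ)
    (hn : IsLinRec (minpoly ℚ β) (fun i => (n i : ℚ))) :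
    ∀ j : ℕ, ∃ i₀ : ℕ, ∀ i : ℕ, i₀ ≤ i →
      n (i + j) = ⌊β ^ j * (n i : ℝ) + 1 / 2⌋ :=
  stmt12' β hβ n hn
end

section
/- Let K and L be number fields, let S ⊆ K be a generalised polynomial subset of K, let f : K → ℂ be a generalised polynomial map on K taking values in L, and let g_1,…,g_r : L → ℂ be generalised polynomial maps on L taking values in K. Suppose that for each x ∈ S there exists 1 ≤ i ≤ r such that g_i(f(x)) = x. Then the image f(S) = {f(x) : x ∈ S} is a generalised polynomial subset of L. -/
open Polynomial IntermediateField

lemma isGP_sum {n : ℕ} {ι : Type*} (s : Finset ι) (F : ι → (Fin n → ℝ) → ℝ)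
    (h : ∀ i ∈ s, IsGP (F i)) : IsGP (fun x => ∑ i ∈ s, F i x) := by
  classical
  induction s using Finset.cons_induction with
  | empty => simpa using IsGP.const (d := n) 0
  | cons a s ha ih =>
    have := (h a (Finset.mem_cons_self a s)).add (ih fun i hi => h i (Finset.mem_cons_of_mem hi))
    simpa [Finset.sum_cons, Finset.sum_insert ha] using this

lemma isGP_prod {n : ℕ} {ι : Type*} (s : Finset ι) (F : ι → (Fin n → ℝ) → ℝ)
    (h : ∀ i ∈ s, IsGP (F i)) : IsGP (fun x => ∏ i ∈ s, F i x) := by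
  classical
  induction s using Finset.cons_induction with
  | empty => simpa using IsGP.const (d := n) 1
  | cons a s ha ih =>
    have := (h a (Finset.mem_cons_self a s)).mul (ih fun i hi => h i (Finset.mem_cons_of_mem hi))
    simpa [Finset.prod_cons, Finset.prod_insert ha] using this

lemma IsGP.constMul {n : ℕ} (c : ℝ) {f : (Fin n → ℝ) → ℝ} (hf : IsGP f) :
    IsGP (fun x => c * f x) := (IsGP.const c).mul hf

lemma IsGP.neg {n : ℕ} {f : (Fin n → ℝ) → ℝ} (hf : IsGP f) : IsGP (fun x => -f x) := by
  simpa using hf.constMul (-1)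

lemma IsGP.sub {n : ℕ} {f g : (Fin n → ℝ) → ℝ} (hf : IsGP f) (hg : IsGP g) :
    IsGP (fun x => f x - g x) := by
  simpa [sub_eq_add_neg] using hf.add hg.neg

lemma IsGP.comp_tuple {n : ℕ} : ∀ {m : ℕ} {G : (Fin m → ℝ) → ℝ}, IsGP G →
    ∀ (w : Fin m → (Fin n → ℝ) → ℝ), (∀ j, IsGP (w j)) →
    IsGP (fun x => G (fun j => w j x)) := by
  intro m G hG
  induction hG with
  | const c => intro w hw; exact .const c
  | linear φ =>
    intro w hw
    have h : (fun x : Fin n → ℝ => φ (fun j => w j x))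
        = fun x => ∑ i, (w i x) * φ (fun j => if i = j then 1 else 0) := by
      funext x; rw [LinearMap.pi_apply_eq_sum_univ]; simp [smul_eq_mul]
    rw [h]
    exact isGP_sum _ _ (fun i _ => (hw i).mul (IsGP.const _))
  | add hf hg ihf ihg => intro w hw; exact (ihf w hw).add (ihg w hw)
  | mul hf hg ihf ihg => intro w hw; exact (ihf w hw).mul (ihg w hw)
  | floor hf ih => intro w hw; exact (ih w hw).floor

lemma isGP_decomp {n : ℕ} {g : (Fin n → ℝ) → ℝ} (hg : IsGP g) :
    ∃ (ι : Type) (_ : Fintype ι) (c : ι → ℝ) (u : ι → (Fin n → ℝ) → ℝ),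
      (∀ k, IsGP (u k)) ∧
      (∀ k (q : Fin n → ℚ), ∃ r : ℚ, u k (fun i => (q i : ℝ)) = (r : ℝ)) ∧
      (∀ q : Fin n → ℚ, g (fun i => (q i : ℝ)) = ∑ k, c k * u k (fun i => (q i : ℝ))) := by
  induction hg with
  | const c =>
    exact ⟨Unit, inferInstance, fun _ => c, fun _ => fun _ => 1,
      fun _ => IsGP.const 1, fun _ _ => ⟨1, by norm_num⟩, fun q => by simp⟩
  | linear φ =>
    refine ⟨Fin n, inferInstance, fun i => φ (fun j => if i = j then 1 else 0),
      fun i => fun x => x i, fun i => IsGP.linear (LinearMap.proj i),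
      fun i q => ⟨q i, rfl⟩, fun q => ?_⟩
    change φ (fun i => ((q i : ℚ) : ℝ)) = _
    rw [LinearMap.pi_apply_eq_sum_univ]
    simp [smul_eq_mul, mul_comm]
  | @add f₁ f₂ h₁ h₂ ih₁ ih₂ =>
    obtain ⟨ι₁, _, c₁, u₁, hu₁, hr₁, he₁⟩ := ih₁
    obtain ⟨ι₂, _, c₂, u₂, hu₂, hr₂, he₂⟩ := ih₂
    refine ⟨ι₁ ⊕ ι₂, inferInstance, Sum.elim c₁ c₂, Sum.elim u₁ u₂,
      fun k => by cases k <;> simp [hu₁, hu₂], fun k q => by cases k <;> simp [hr₁, hr₂], fun q => ?_⟩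
    rw [Fintype.sum_sum_type]
    simp only [Sum.elim_inl, Sum.elim_inr]
    rw [he₁ q, he₂ q]
  | @mul f₁ f₂ h₁ h₂ ih₁ ih₂ =>
    obtain ⟨ι₁, _, c₁, u₁, hu₁, hr₁, he₁⟩ := ih₁
    obtain ⟨ι₂, _, c₂, u₂, hu₂, hr₂, he₂⟩ := ih₂
    refine ⟨ι₁ × ι₂, inferInstance, fun p => c₁ p.1 * c₂ p.2,
      fun p => fun x => u₁ p.1 x * u₂ p.2 x,
      fun p => (hu₁ p.1).mul (hu₂ p.2), fun p q => ?_, fun q => ?_⟩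
    · obtain ⟨r₁, hr₁'⟩ := hr₁ p.1 q
      obtain ⟨r₂, hr₂'⟩ := hr₂ p.2 q
      refine ⟨r₁ * r₂, ?_⟩
      beta_reduce
      rw [hr₁', hr₂']; push_cast; ring
    · beta_reduce
      rw [he₁ q, he₂ q, Finset.sum_mul_sum, Fintype.sum_prod_type]
      exact Finset.sum_congr rfl fun a _ => Finset.sum_congr rfl fun b _ => by ring
  | @floor f₁ h₁ ih =>
    refine ⟨Unit, inferInstance, fun _ => 1, fun _ => fun x => ((⌊f₁ x⌋ : ℤ) : ℝ),
      fun _ => h₁.floor, fun _ q => ⟨(⌊f₁ (fun i => (q i : ℝ))⌋ : ℤ), by push_cast; ring⟩,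
      fun q => by simp⟩

open scoped Classical in
lemma floor_add_floor_neg (t : ℝ) :
    (⌊t⌋ : ℝ) + (⌊-t⌋ : ℝ) + 1 = if ∃ m : ℤ, t = (m : ℝ) then 1 else 0 := by
  by_cases h : ∃ m : ℤ, t = (m : ℝ)
  · obtain ⟨m, rfl⟩ := h
    rw [if_pos ⟨m, rfl⟩, ← Int.cast_neg, Int.floor_intCast, Int.floor_intCast]
    push_cast; ring
  · rw [if_neg h]
    have h2 : (⌊t⌋ : ℝ) < t := lt_of_le_of_ne (Int.floor_le t) (fun he => h ⟨⌊t⌋, he.symm⟩)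
    have h1 : ⌊-t⌋ = -⌊t⌋ - 1 := by
      rw [Int.floor_eq_iff]
      constructor
      · push_cast; linarith [Int.lt_floor_add_one t]
      · push_cast; linarith
    rw [h1]; push_cast; ring

noncomputable def zind {n : ℕ} (F : (Fin n → ℝ) → ℝ) : (Fin n → ℝ) → ℝ :=
  fun x => ((⌊F x⌋ : ℝ) + (⌊-F x⌋ : ℝ) + 1) *
    ((⌊Real.sqrt 2 * F x⌋ : ℝ) + (⌊-(Real.sqrt 2 * F x)⌋ : ℝ) + 1)

lemma IsGP.zind {n : ℕ} {F : (Fin n → ℝ) → ℝ} (hF : IsGP F) : IsGP (_root_.zind F) :=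
  ((hF.floor.add hF.neg.floor).add (IsGP.const 1)).mul
    (((hF.constMul (Real.sqrt 2)).floor.add (hF.constMul (Real.sqrt 2)).neg.floor).add
      (IsGP.const 1))

open scoped Classical in
lemma zind_apply {n : ℕ} (F : (Fin n → ℝ) → ℝ) (x : Fin n → ℝ) :
    zind F x = if F x = 0 then 1 else 0 := by
  unfold zind
  rw [floor_add_floor_neg (F x), floor_add_floor_neg (Real.sqrt 2 * F x)]
  by_cases ht : F x = 0
  · rw [ht, mul_zero, if_pos (⟨0, by norm_num⟩ : ∃ m : ℤ, (0:ℝ) = (m:ℝ))]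
    norm_num
  · rw [if_neg ht]
    by_cases h1 : ∃ m : ℤ, F x = (m : ℝ)
    · rw [if_pos h1, if_neg, mul_zero]
      rintro ⟨k, hk⟩
      obtain ⟨m, hm⟩ := h1
      have hm0 : (m : ℝ) ≠ 0 := by rw [← hm]; exact ht
      apply irrational_sqrt_two
      refine ⟨(k : ℚ) / (m : ℚ), ?_⟩
      push_cast
      rw [div_eq_iff hm0]
      rw [hm] at hk
      linarith [hk]
    · rw [if_neg h1, zero_mul]

lemma isGPMapR_basis {K : Type*} [Field K] [Algebra ℚ K] {f : K → ℝ}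
    (hf : IsGPMapR f) {m : ℕ} (b' : Module.Basis (Fin m) ℚ K) :
    ∃ g : (Fin m → ℝ) → ℝ, IsGP g ∧ ∀ x : K, f x = g (fun i => ((b'.repr x) i : ℝ)) := by
  obtain ⟨n, b, g, hg, hfg⟩ := hf
  refine ⟨fun t => g (fun i => ∑ j, ((b.repr (b' j)) i : ℝ) * t j),
    hg.comp_tuple _ (fun i => isGP_sum _ _ fun j _ =>
      (IsGP.linear (LinearMap.proj j)).constMul _), ?_⟩
  intro x
  rw [hfg]
  congr 1
  funext i
  have key : (b.repr x) i = ∑ j, (b'.repr x) j * (b.repr (b' j)) i := by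
    conv_lhs => rw [← b'.sum_repr x]
    rw [map_sum, Finsupp.finset_sum_apply]
    exact Finset.sum_congr rfl fun j _ => by
      rw [map_smul]; simp [smul_eq_mul]
  rw [key]
  push_cast
  exact Finset.sum_congr rfl fun j _ => by ring

lemma exists_proj (K : IntermediateField ℚ ℂ) :
    ∃ D : ℂ →ₗ[ℚ] K, ∀ (z : ℂ) (hz : z ∈ K), D z = ⟨z, hz⟩ := by
  set p : Submodule ℚ ℂ := Subalgebra.toSubmodule K.toSubalgebra with hp
  obtain ⟨q, hq⟩ := Submodule.exists_isCompl p
  let E : p →ₗ[ℚ] K :=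
    { toFun := fun z => ⟨z.1, z.2⟩
      map_add' := fun a b => rfl
      map_smul' := fun a b => rfl }
  refine ⟨E.comp (p.projectionOnto q hq), fun z hz => ?_⟩
  have hz' : z ∈ p := hz
  have h2 : (p.projectionOnto q hq) z = ⟨z, hz'⟩ := by
    have := Submodule.linearProjOfIsCompl_apply_left hq ⟨z, hz'⟩
    simpa using this
  rw [LinearMap.comp_apply, h2]
  rfl

lemma coord_isGP {K L : IntermediateField ℚ ℂ}
    {h : L → ℂ} (hre : IsGPMapR fun y => (h y).re) (him : IsGPMapR fun y => (h y).im)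
    (hK : ∀ y : L, h y ∈ K) (d : K →ₗ[ℚ] ℚ)
    {m : ℕ} (bL : Module.Basis (Fin m) ℚ L) :
    ∃ g : (Fin m → ℝ) → ℝ, IsGP g ∧
      ∀ y : L, ((d ⟨h y, hK y⟩ : ℚ) : ℝ) = g (fun i => ((bL.repr y) i : ℝ)) := by
  obtain ⟨G1, hG1, he1⟩ := isGPMapR_basis hre bL
  obtain ⟨G2, hG2, he2⟩ := isGPMapR_basis him bL
  obtain ⟨ι₁, _, c₁, u₁, hu₁, hr₁, hs1⟩ := isGP_decomp hG1
  obtain ⟨ι₂, _, c₂, u₂, hu₂, hr₂, hs2⟩ := isGP_decomp hG2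
  obtain ⟨D, hD⟩ := exists_proj K
  set Dq : ℂ →ₗ[ℚ] ℚ := d.comp D with hDq
  refine ⟨fun t => (∑ k, ((Dq ((c₁ k : ℂ)) : ℚ) : ℝ) * u₁ k t)
      + (∑ l, ((Dq ((c₂ l : ℂ) * Complex.I) : ℚ) : ℝ) * u₂ l t),
    (isGP_sum _ _ fun k _ => (hu₁ k).constMul _).add
      (isGP_sum _ _ fun l _ => (hu₂ l).constMul _), ?_⟩
  intro y
  set q : Fin m → ℚ := fun i => (bL.repr y) i with hq
  set t : Fin m → ℝ := fun i => ((q i : ℚ) : ℝ) with ht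
  choose r₁ hr₁' using fun k => hr₁ k q
  choose r₂ hr₂' using fun l => hr₂ l q
  have hre' : (((h y).re : ℝ) : ℂ) = ∑ k, (r₁ k) • ((c₁ k : ℂ)) := by
    rw [he1 y, hs1 q]
    push_cast
    refine Finset.sum_congr rfl fun k _ => ?_
    rw [show ((u₁ k t : ℝ) : ℂ) = ((r₁ k : ℚ) : ℂ) by rw [hr₁' k]; push_cast; ring]
    rw [Rat.smul_def]; ring
  have him' : (((h y).im : ℝ) : ℂ) = ∑ l, (r₂ l) • ((c₂ l : ℂ)) := by
    rw [he2 y, hs2 q]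
    push_cast
    refine Finset.sum_congr rfl fun l _ => ?_
    rw [show ((u₂ l t : ℝ) : ℂ) = ((r₂ l : ℚ) : ℂ) by rw [hr₂' l]; push_cast; ring]
    rw [Rat.smul_def]; ring
  have hhy : h y = (∑ k, (r₁ k) • ((c₁ k : ℂ)))
      + ∑ l, (r₂ l) • ((c₂ l : ℂ) * Complex.I) := by
    conv_lhs => rw [← Complex.re_add_im (h y)]
    rw [hre', him', Finset.sum_mul]
    congr 1
    exact Finset.sum_congr rfl fun l _ => smul_mul_assoc _ _ _
  have Dval : d ⟨h y, hK y⟩ = Dq (h y) := by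
    rw [hDq, LinearMap.comp_apply, hD (h y) (hK y)]
  rw [Dval, hhy, map_add, map_sum, map_sum]
  simp only [map_smul, smul_eq_mul]
  push_cast
  refine congrArg₂ (· + ·) ?_ ?_ <;>
    refine Finset.sum_congr rfl fun k _ => ?_
  · rw [← hr₁' k]; ring
  · rw [← hr₂' k]; ring

lemma coe_sum_repr {L : IntermediateField ℚ ℂ} {m : ℕ} (bL : Module.Basis (Fin m) ℚ L) (y : L) :
    (y : ℂ) = ∑ j, ((bL.repr y) j : ℂ) * ((bL j : L) : ℂ) := by
  conv_lhs => rw [← bL.sum_repr y]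
  rw [show ((∑ j, (bL.repr y) j • bL j : L) : ℂ)
      = ∑ j, (((bL.repr y) j • bL j : L) : ℂ) from by push_cast; rfl]
  refine Finset.sum_congr rfl fun j _ => ?_
  rw [Rat.smul_def]
  push_cast
  rfl

lemma coe_re_eq {L : IntermediateField ℚ ℂ} {m : ℕ} (bL : Module.Basis (Fin m) ℚ L) (y : L) :
    (y : ℂ).re = ∑ j, (((bL j : L) : ℂ).re) * ((bL.repr y) j : ℝ) := by
  rw [coe_sum_repr bL y, Complex.re_sum]
  refine Finset.sum_congr rfl fun j _ => ?_
  simp [Complex.mul_re]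
  ring

lemma coe_im_eq {L : IntermediateField ℚ ℂ} {m : ℕ} (bL : Module.Basis (Fin m) ℚ L) (y : L) :
    (y : ℂ).im = ∑ j, (((bL j : L) : ℂ).im) * ((bL.repr y) j : ℝ) := by
  rw [coe_sum_repr bL y, Complex.im_sum]
  refine Finset.sum_congr rfl fun j _ => ?_
  simp [Complex.mul_im]
  ring


/-- if `S ⊆ K` is a generalised polynomial set, `f : K → ℂ` is a
generalised polynomial map taking values in `L`, `g_1, …, g_r : L → ℂ` are generalised
polynomial maps taking values in `K`, and every `x ∈ S` satisfies `g_i(f(x)) = x` for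
some `i`, then `f(S)` is a generalised polynomial subset of `L`. -/
theorem stmt13 (K L : IntermediateField ℚ ℂ)
    [FiniteDimensional ℚ K] [FiniteDimensional ℚ L]
    (S : Set K) (hS : IsGPSet S)
    (f : K → ℂ) (hf : IsGPMapC f) (hfL : ∀ x : K, f x ∈ L)
    (r : ℕ) (g : Fin r → (L → ℂ)) (hg : ∀ i, IsGPMapC (g i))
    (hgK : ∀ i y, g i y ∈ K)
    (hsec : ∀ x ∈ S, ∃ i : Fin r, g i ⟨f x, hfL x⟩ = (x : ℂ)) :
    IsGPSet {y : L | ∃ x ∈ S, f x = (y : ℂ)} := by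
  classical
  let bK : Module.Basis (Fin (Module.finrank ℚ K)) ℚ K := Module.finBasis ℚ K
  let bL : Module.Basis (Fin (Module.finrank ℚ L)) ℚ L := Module.finBasis ℚ L
  obtain ⟨GS, hGS, heS⟩ := isGPMapR_basis hS bK
  obtain ⟨Fre, hFre, heFre⟩ := isGPMapR_basis hf.1 bK
  obtain ⟨Fim, hFim, heFim⟩ := isGPMapR_basis hf.2 bK
  set X : Fin r → L → K := fun i y => ⟨g i y, hgK i y⟩ with hX
  have H : ∀ (i : Fin r) (j : Fin (Module.finrank ℚ K)),
      ∃ w : (Fin (Module.finrank ℚ L) → ℝ) → ℝ, IsGP w ∧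
        ∀ y : L, (((bK.repr (X i y)) j : ℚ) : ℝ) = w (fun a => ((bL.repr y) a : ℝ)) := by
    intro i j
    obtain ⟨w, hw, hwe⟩ := coord_isGP (hg i).1 (hg i).2 (hgK i) (bK.coord j) bL
    refine ⟨w, hw, fun y => ?_⟩
    have := hwe y
    rwa [Module.Basis.coord_apply] at this
  choose w hw hwe using H
  set t : L → (Fin (Module.finrank ℚ L) → ℝ) := fun y a => ((bL.repr y) a : ℝ) with hT
  have hcoords : ∀ (i : Fin r) (y : L),
      (fun j => (((bK.repr (X i y)) j : ℚ) : ℝ)) = fun j => w i j (t y) := by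
    intro i y; funext j; exact hwe i j y
  -- GP building blocks
  set A : Fin r → (Fin (Module.finrank ℚ L) → ℝ) → ℝ :=
    fun i u => GS (fun j => w i j u) with hA
  set Rre : Fin r → (Fin (Module.finrank ℚ L) → ℝ) → ℝ :=
    fun i u => Fre (fun j => w i j u) with hRre
  set Rim : Fin r → (Fin (Module.finrank ℚ L) → ℝ) → ℝ :=
    fun i u => Fim (fun j => w i j u) with hRim
  set yre : (Fin (Module.finrank ℚ L) → ℝ) → ℝ :=
    fun u => ∑ j, (((bL j : L) : ℂ).re) * u j with hyre
  set yim : (Fin (Module.finrank ℚ L) → ℝ) → ℝ :=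
    fun u => ∑ j, (((bL j : L) : ℂ).im) * u j with hyim
  set B : Fin r → (Fin (Module.finrank ℚ L) → ℝ) → ℝ :=
    fun i u => zind (fun v => Rre i v - yre v) u * zind (fun v => Rim i v - yim v) u with hB
  set gT : (Fin (Module.finrank ℚ L) → ℝ) → ℝ :=
    fun u => 1 - ∏ i, (1 - A i u * B i u) with hgT
  have hyreGP : IsGP yre := isGP_sum _ _ fun j _ => (IsGP.linear (LinearMap.proj j)).constMul _
  have hyimGP : IsGP yim := isGP_sum _ _ fun j _ => (IsGP.linear (LinearMap.proj j)).constMul _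
  have hgTGP : IsGP gT := by
    refine (IsGP.const 1).sub (isGP_prod _ _ fun i _ => (IsGP.const 1).sub ?_)
    refine (hGS.comp_tuple _ fun j => hw i j).mul ?_
    exact ((hFre.comp_tuple _ fun j => hw i j).sub hyreGP).zind.mul
      ((hFim.comp_tuple _ fun j => hw i j).sub hyimGP).zind
  refine ⟨Module.finrank ℚ L, bL, gT, hgTGP, ?_⟩
  intro y
  -- pointwise values
  have hAval : ∀ i, A i (t y) = Set.indicator S (fun _ => (1:ℝ)) (X i y) := by
    intro i
    rw [hA]
    have := heS (X i y)
    rw [this]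
    congr 1
    exact (hcoords i y).symm ▸ rfl
  have hRreval : ∀ i, Rre i (t y) = (f (X i y)).re := by
    intro i
    rw [hRre]
    have := heFre (X i y)
    rw [this]
    congr 1
    exact (hcoords i y).symm ▸ rfl
  have hRimval : ∀ i, Rim i (t y) = (f (X i y)).im := by
    intro i
    rw [hRim]
    have := heFim (X i y)
    rw [this]
    congr 1
    exact (hcoords i y).symm ▸ rfl
  have hyreval : yre (t y) = (y : ℂ).re := (coe_re_eq bL y).symm
  have hyimval : yim (t y) = (y : ℂ).im := (coe_im_eq bL y).symm
  have hBval : ∀ i, B i (t y) = if f (X i y) = (y : ℂ) then 1 else 0 := by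
    intro i
    show zind (fun v => Rre i v - yre v) (t y) * zind (fun v => Rim i v - yim v) (t y) = _
    rw [zind_apply, zind_apply]
    beta_reduce
    rw [hRreval i, hRimval i, hyreval, hyimval]
    by_cases hfe : f (X i y) = (y : ℂ)
    · rw [if_pos hfe, if_pos (show (f (X i y)).re - (y:ℂ).re = 0 by rw [hfe]; ring),
        if_pos (show (f (X i y)).im - (y:ℂ).im = 0 by rw [hfe]; ring)]
      norm_num
    · rw [if_neg hfe]
      rcases (not_and_or.mp (fun hc : (f (X i y)).re = (y:ℂ).re ∧ (f (X i y)).im = (y:ℂ).im =>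
        hfe (Complex.ext hc.1 hc.2))) with hc | hc
      · rw [if_neg (show ¬ ((f (X i y)).re - (y:ℂ).re = 0) from fun hz => hc (by linarith [hz]))]
        ring
      · rw [if_neg (show ¬ ((f (X i y)).im - (y:ℂ).im = 0) from fun hz => hc (by linarith [hz]))]
        ring
  have hterm : ∀ i, 1 - A i (t y) * B i (t y)
      = if (X i y ∈ S ∧ f (X i y) = (y : ℂ)) then 0 else 1 := by
    intro i
    rw [hAval i, hBval i]
    by_cases hP : X i y ∈ S ∧ f (X i y) = (y : ℂ)
    · rw [if_pos hP, Set.indicator_of_mem hP.1, if_pos hP.2]; ring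
    · rw [if_neg hP]
      by_cases h1 : X i y ∈ S
      · have h2 : ¬ f (X i y) = (y : ℂ) := fun h2 => hP ⟨h1, h2⟩
        rw [Set.indicator_of_mem h1, if_neg h2]; ring
      · rw [Set.indicator_of_notMem h1]; ring
  show Set.indicator {y : L | ∃ x ∈ S, f x = (y : ℂ)} (fun _ => (1:ℝ)) y
      = 1 - ∏ i, (1 - A i (t y) * B i (t y))
  by_cases hy : y ∈ {y : L | ∃ x ∈ S, f x = (y : ℂ)}
  · rw [Set.indicator_of_mem hy]
    obtain ⟨x, hxS, hfx⟩ := hy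
    obtain ⟨i, hi⟩ := hsec x hxS
    have hfxy : (⟨f x, hfL x⟩ : L) = y := Subtype.ext hfx
    have hXx : X i y = x := by
      apply Subtype.ext
      rw [hX]
      show g i y = (x : ℂ)
      rw [← hfxy]
      exact hi
    have hP : X i y ∈ S ∧ f (X i y) = (y : ℂ) := by
      constructor
      · rw [hXx]; exact hxS
      · rw [hXx]; exact hfx
    have : (∏ i, (1 - A i (t y) * B i (t y))) = 0 := by
      refine Finset.prod_eq_zero (Finset.mem_univ i) ?_
      rw [hterm i, if_pos hP]
    rw [this]; ring
  · rw [Set.indicator_of_notMem hy]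
    have : (∏ i, (1 - A i (t y) * B i (t y))) = 1 := by
      refine Finset.prod_eq_one fun i _ => ?_
      rw [hterm i, if_neg]
      rintro ⟨h1, h2⟩
      exact hy ⟨X i y, h1, h2⟩
    rw [this]; ring
end

section
/- Let β be a Salem number and let L ⊆ ℂ be the splitting field of the minimal polynomial of β over ℚ. Let (n_i)_{i≥0} be a linear recurrent sequence of rational numbers whose characteristic polynomial is the minimal polynomial of β, and assume that (n_i) is not identically zero. Then there exists a finite family g_1,…,g_r of generalised polynomial maps ℚ → ℂ on ℚ, each taking values in L, such that for every i ∈ ℕ₀ there exists 1 ≤ c ≤ r with g_c(n_i) = β^i. -/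
open Polynomial IntermediateField

/-- A map `f : ℚ → ℂ` is a generalised polynomial map on `ℚ` if it is the restriction
of a generalised polynomial map `ℝ → ℂ`. -/
def IsGPMapQC (f : ℚ → ℂ) : Prop :=
  ∃ g : (Fin 1 → ℝ) → ℂ,
    (IsGP (fun x => (g x).re) ∧ IsGP (fun x => (g x).im)) ∧
    ∀ q : ℚ, f q = g (fun _ => (q : ℝ))

lemma IsGP.congr {d : ℕ} {f g : (Fin d → ℝ) → ℝ} (h : IsGP f) (e : ∀ x, f x = g x) :
    IsGP g := (funext e : f = g) ▸ h

lemma isGP_finsum {d : ℕ} {ι : Type*} (s : Finset ι) (f : ι → (Fin d → ℝ) → ℝ)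
    (hf : ∀ i ∈ s, IsGP (f i)) : IsGP (fun x => ∑ i ∈ s, f i x) := by
  classical
  induction s using Finset.induction_on with
  | empty => simpa using IsGP.const (d := d) 0
  | @insert a s' h ih =>
      simp only [Finset.sum_insert h]
      exact IsGP.add (hf a (Finset.mem_insert_self a s'))
        (ih fun i hi => hf i (Finset.mem_insert_of_mem hi))

lemma isGP_floor_affine (c1 c2 c3 : ℝ) :
    IsGP (fun x : Fin 1 → ℝ => c1 * ((⌊c2 * x 0⌋ : ℝ) + c3)) := by
  have h1 : IsGP (fun x : Fin 1 → ℝ => c2 * x 0) := by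
    have := IsGP.linear (c2 • (LinearMap.proj 0 : (Fin 1 → ℝ) →ₗ[ℝ] ℝ))
    simpa using this
  exact IsGP.mul (IsGP.const c1) (IsGP.add (IsGP.floor h1) (IsGP.const c3))

def SatRec {R : Type*} [CommRing R] (m : ℕ) (a : ℕ → R) (u : ℕ → R) : Prop :=
  ∀ i, u (i + m) = ∑ j ∈ Finset.range m, a j * u (i + j)

lemma satRec_unique {R : Type*} [CommRing R] {m : ℕ} {a : ℕ → R} {u v : ℕ → R}
    (hu : SatRec m a u) (hv : SatRec m a v) (h : ∀ s, s < m → u s = v s) :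
    ∀ i, u i = v i := by
  intro i
  induction i using Nat.strong_induction_on with
  | _ i ih =>
    rcases lt_or_ge i m with h' | h'
    · exact h i h'
    · obtain ⟨i', rfl⟩ : ∃ i', i = i' + m := ⟨i - m, (Nat.sub_add_cancel h').symm⟩
      rw [hu, hv]
      refine Finset.sum_congr rfl fun j hj => ?_
      have hjm := Finset.mem_range.mp hj
      rw [ih _ (by omega)]

lemma satRec_pow {R : Type*} [CommRing R] {m : ℕ} {a : ℕ → R} {z : R}
    (hz : z ^ m = ∑ j ∈ Finset.range m, a j * z ^ j) : SatRec m a (fun i => z ^ i) := by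
  intro i
  simp only [pow_add, hz, Finset.mul_sum]
  refine Finset.sum_congr rfl fun j _ => by ring

lemma satRec_lin {R : Type*} [CommRing R] {m : ℕ} {a : ℕ → R} {ι : Type*}
    (s : Finset ι) (c : ι → R) (w : ι → ℕ → R) (hw : ∀ x ∈ s, SatRec m a (w x)) :
    SatRec m a (fun i => ∑ x ∈ s, c x * w x i) := by
  intro i
  simp only
  rw [Finset.sum_congr rfl fun x hx => by rw [hw x hx i]]
  simp only [Finset.mul_sum]
  rw [Finset.sum_comm]
  refine Finset.sum_congr rfl fun j _ => ?_
  exact Finset.sum_congr rfl fun x _ => by ring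


lemma satRec_shift {R : Type*} [CommRing R] {m : ℕ} {a : ℕ → R} {u : ℕ → R} (t : ℕ)
    (hu : SatRec m a u) : SatRec m a (fun i => u (i + t)) := by
  intro i
  simp only
  rw [add_right_comm i m t, hu (i + t)]
  exact Finset.sum_congr rfl fun j _ => by rw [add_right_comm i t j]

/-- for a Salem number `β`, the splitting field `L ⊆ ℂ` of its minimal
polynomial, and a not-identically-zero rational linear recurrent sequence `(n_i)` with
characteristic polynomial the minimal polynomial of `β`, there is a finite family of
generalised polynomial maps `ℚ → ℂ` with values in `L` such that for each `i` one of
them maps `n_i` to `β^i`. -/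
theorem stmt14 (β : ℝ) (hβ : IsSalem β)
    (L : IntermediateField ℚ ℂ)
    (hL : L = IntermediateField.adjoin ℚ ((minpoly ℚ β).rootSet ℂ))
    (n : ℕ → ℚ) (hn : IsLinRec (minpoly ℚ β) n) (hnz : ∃ i, n i ≠ 0) :
    ∃ (r : ℕ) (g : Fin r → (ℚ → ℂ)),
      (∀ c, IsGPMapQC (g c)) ∧ (∀ c q, g c q ∈ L) ∧
      ∀ i : ℕ, ∃ c : Fin r, g c (n i) = (β : ℂ) ^ i := by
  classical
  obtain ⟨hint, hβ1, hconj, -⟩ := hβ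
  have hQint : IsIntegral ℚ β := hint.tower_top
  set p : ℚ[X] := minpoly ℚ β with hp
  set m : ℕ := p.natDegree with hmdef
  have hm : 0 < m := minpoly.natDegree_pos hQint
  have pmonic : p.Monic := minpoly.monic hQint
  have pirr : Irreducible p := minpoly.irreducible hQint
  have hp0 : p ≠ 0 := minpoly.ne_zero hQint
  -- the recurrence, over ℚ and over ℂ
  have hnQ : SatRec m (fun j => -(p.coeff j)) n := hn
  have hnC : SatRec m (fun j => (-(p.coeff j) : ℂ)) (fun i => (n i : ℂ)) := by
    intro i
    simp only
    rw [hn i]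
    push_cast
    rfl
  -- root identity for any complex root of p
  have hroot_pow : ∀ z : ℂ, aeval z p = 0 →
      z ^ m = ∑ j ∈ Finset.range m, (-(p.coeff j) : ℂ) * z ^ j := by
    intro z hz
    rw [aeval_eq_sum_range, Finset.sum_range_succ, ← hmdef] at hz
    rw [pmonic.coeff_natDegree] at hz
    have : (1 : ℚ) • z ^ m = -∑ j ∈ Finset.range m, p.coeff j • z ^ j := by
      rw [eq_neg_iff_add_eq_zero, add_comm]; exact hz
    rw [one_smul] at this
    rw [this, ← Finset.sum_neg_distrib]
    refine Finset.sum_congr rfl fun j _ => ?_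
    rw [Rat.smul_def]; ring
  have hβroot : aeval ((β : ℝ) : ℂ) p = 0 := by
    have h1 : aeval ((algebraMap ℝ ℂ) β) p = algebraMap ℝ ℂ (aeval β p) :=
      aeval_algebraMap_apply ℂ β p
    rw [minpoly.aeval ℚ β] at h1
    simpa using h1
  -- shift operator and annihilator
  set σ : (ℕ → ℚ) →ₗ[ℚ] (ℕ → ℚ) :=
    { toFun := fun u i => u (i + 1), map_add' := fun u v => rfl,
      map_smul' := fun c u => rfl } with hσ
  have hσpow : ∀ (j : ℕ) (u : ℕ → ℚ) (i : ℕ), (σ ^ j) u i = u (i + j) := by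
    intro j
    induction j with
    | zero => intro u i; simp
    | succ j ih =>
        intro u i
        rw [pow_succ, Module.End.mul_apply, ih (σ u) i]
        show u (i + j + 1) = u (i + (j + 1))
        rw [add_assoc]
  have hpn : (aeval σ p) n = 0 := by
    funext i
    rw [aeval_eq_sum_range, ← hmdef]
    simp only [LinearMap.coe_sum, Finset.sum_apply, LinearMap.smul_apply,
      Pi.smul_apply, smul_eq_mul, hσpow]
    rw [Finset.sum_range_succ, pmonic.coeff_natDegree, hn i]
    simp only [Pi.zero_apply, one_mul]
    rw [← Finset.sum_add_distrib]
    refine Finset.sum_eq_zero fun j _ => by ring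
  have hann : ∀ q : ℚ[X], q.natDegree < m → (aeval σ q) n = 0 → q = 0 := by
    intro q hdeg hq
    by_contra hq0
    have hndvd : ¬ p ∣ q := fun hdvd =>
      absurd (Polynomial.natDegree_le_of_dvd hdvd hq0) (by omega)
    have hco : IsCoprime p q := (pirr.coprime_iff_not_dvd).mpr hndvd
    obtain ⟨a, b, hab⟩ := hco
    have h1 : (aeval σ (a * p + b * q)) n = n := by
      rw [hab]; simp
    rw [map_add, map_mul, map_mul] at h1
    simp only [LinearMap.add_apply, Module.End.mul_apply, hpn, hq, map_zero,
      add_zero, zero_add] at h1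
    obtain ⟨i, hi⟩ := hnz
    exact hi (by rw [← congrFun h1 i]; rfl)
  -- Casorati matrix
  set A : Matrix (Fin m) (Fin m) ℚ := fun s j => n ((s : ℕ) + (j : ℕ)) with hA
  have hker : ∀ c : Fin m → ℚ, A.mulVec c = 0 → c = 0 := by
    intro c hc
    set q : ℚ[X] := ∑ j : Fin m, Polynomial.C (c j) * Polynomial.X ^ (j : ℕ) with hqdef
    have hqcoeff : ∀ j : Fin m, q.coeff (j : ℕ) = c j := by
      intro j
      rw [hqdef, Polynomial.finset_sum_coeff]
      rw [Finset.sum_eq_single j]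
      · simp
      · intro j' _ hj'
        simp only [Polynomial.coeff_C_mul, Polynomial.coeff_X_pow]
        rw [if_neg (by simpa [Fin.val_eq_val] using hj'.symm), mul_zero]
      · simp
    have hqdeg : q.natDegree < m := by
      refine lt_of_le_of_lt (Polynomial.natDegree_sum_le_of_forall_le _ _
        (fun j _ => ?_)) (Nat.sub_lt hm one_pos |> fun h => h)
      · calc (Polynomial.C (c j) * Polynomial.X ^ (j:ℕ)).natDegree
              ≤ (Polynomial.X ^ (j:ℕ) : ℚ[X]).natDegree := Polynomial.natDegree_C_mul_le _ _
          _ ≤ m - 1 := by rw [Polynomial.natDegree_X_pow]; omega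
    have hq_apply : ∀ i : ℕ, (aeval σ q) n i = ∑ j : Fin m, c j * n (i + (j : ℕ)) := by
      intro i
      rw [hqdef, map_sum]
      simp only [map_mul, Polynomial.aeval_C, map_pow, Polynomial.aeval_X,
        LinearMap.coe_sum, Finset.sum_apply, Module.End.mul_apply,
        Module.algebraMap_end_apply, Pi.smul_apply, smul_eq_mul, hσpow]
    set w : ℕ → ℚ := fun i => ∑ j : Fin m, c j * n (i + (j : ℕ)) with hw
    have hwrec : SatRec m (fun j => -(p.coeff j)) w :=
      satRec_lin Finset.univ c (fun j i => n (i + (j : ℕ)))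
        (fun j _ => satRec_shift (j : ℕ) hnQ)
    have hw0 : ∀ s, s < m → w s = 0 := by
      intro s hs
      have := congrFun hc ⟨s, hs⟩
      simp only [Matrix.mulVec, dotProduct, Pi.zero_apply, hA] at this
      rw [hw]
      rw [← this]
      exact Finset.sum_congr rfl fun j _ => by ring
    have hwz : ∀ i, w i = 0 :=
      satRec_unique hwrec (by intro i; simp) hw0
    have hqn : (aeval σ q) n = 0 := funext fun i => by rw [hq_apply i]; exact hwz i
    have hq0 : q = 0 := hann q hqdeg hqn
    funext j
    rw [Pi.zero_apply, ← hqcoeff j, hq0, Polynomial.coeff_zero]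
  have hAinj : Function.Injective A.mulVec := by
    intro c c' hcc'
    have h := hker (c - c') ?_
    · funext j; have := congrFun h j; simp only [Pi.sub_apply, Pi.zero_apply] at this
      linarith [this]
    · rw [Matrix.mulVec_sub, hcc', sub_self]
  have hAunit : IsUnit A := Matrix.mulVec_injective_iff_isUnit.mp hAinj
  obtain ⟨U, hU⟩ := hAunit
  set B : Matrix (Fin m) (Fin m) ℚ := ↑U⁻¹ with hB
  have hAB : A * B = 1 := by rw [← hU, hB]; exact U.mul_inv
  -- transfer to ℂ and solve for d
  set φ : ℚ →+* ℂ := Rat.castHom ℂ with hφ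
  set AC : Matrix (Fin m) (Fin m) ℂ := A.map φ with hAC
  set BC : Matrix (Fin m) (Fin m) ℂ := B.map φ with hBC
  have hABC : AC * BC = 1 := by
    rw [hAC, hBC, ← Matrix.map_mul, hAB]
    simp
  set d : Fin m → ℂ := fun j => ∑ s : Fin m, φ (B j s) * ((β : ℂ)) ^ (s : ℕ) with hd
  have hd_init : ∀ s : Fin m,
      ∑ j : Fin m, d j * (n ((s : ℕ) + (j : ℕ)) : ℂ) = ((β : ℂ)) ^ (s : ℕ) := by
    intro s
    have key : ∀ j : Fin m, (n ((s : ℕ) + (j : ℕ)) : ℂ) = AC s j := by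
      intro j; simp [hAC, hA, hφ]; rfl
    calc ∑ j : Fin m, d j * (n ((s : ℕ) + (j : ℕ)) : ℂ)
        = ∑ j : Fin m, ∑ s' : Fin m, (AC s j * BC j s') * (β : ℂ) ^ (s' : ℕ) := by
          refine Finset.sum_congr rfl fun j _ => ?_
          rw [key j, hd, Finset.sum_mul]
          refine Finset.sum_congr rfl fun s' _ => ?_
          rw [hBC]; simp [Matrix.map_apply]; ring
      _ = ∑ s' : Fin m, (∑ j : Fin m, AC s j * BC j s') * (β : ℂ) ^ (s' : ℕ) := by
          rw [Finset.sum_comm]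
          exact Finset.sum_congr rfl fun s' _ => by rw [Finset.sum_mul]
      _ = ∑ s' : Fin m, (1 : Matrix (Fin m) (Fin m) ℂ) s s' * (β : ℂ) ^ (s' : ℕ) := by
          refine Finset.sum_congr rfl fun s' _ => ?_
          rw [← hABC, Matrix.mul_apply]
      _ = (β : ℂ) ^ (s : ℕ) := by
          rw [Finset.sum_eq_single s]
          · simp
          · intro s' _ hs'; rw [Matrix.one_apply_ne (Ne.symm hs'), zero_mul]
          · simp
  have hmain : ∀ i : ℕ, ((β : ℂ)) ^ i = ∑ j : Fin m, d j * (n (i + (j : ℕ)) : ℂ) := by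
    refine satRec_unique (a := fun j => (-(p.coeff j) : ℂ))
      (satRec_pow (hroot_pow _ hβroot)) ?_ ?_
    · exact satRec_lin Finset.univ d (fun j i => (n (i + (j : ℕ)) : ℂ))
        (fun j _ => satRec_shift (j : ℕ) hnC)
    · intro s hs
      exact (hd_init ⟨s, hs⟩).symm
  -- roots of p over ℂ
  set pC : ℂ[X] := p.map (algebraMap ℚ ℂ) with hpC
  have hpC0 : pC ≠ 0 := by
    rw [hpC]
    exact (Polynomial.map_ne_zero_iff (algebraMap ℚ ℂ).injective).mpr hp0
  have hpCdeg : pC.natDegree = m := by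
    rw [hpC, Polynomial.natDegree_map]
  have hsplits : pC.Splits := IsAlgClosed.splits pC
  have hcard : pC.roots.card = m := by
    rw [← hpCdeg]
    exact (Polynomial.splits_iff_card_roots).mp hsplits
  have hnodup : pC.roots.Nodup := Polynomial.nodup_roots (pirr.separable.map)
  set l : List ℂ := pC.roots.toList with hl
  have hllen : l.length = m := by rw [hl, Multiset.length_toList, hcard]
  have hlnodup : l.Nodup := by have := hnodup; rw [← Multiset.coe_toList pC.roots] at this; rw [hl]; exact Multiset.coe_nodup.mp this
  set ρ : Fin m → ℂ := fun s => l.get (Fin.cast hllen.symm s) with hρ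
  have hρinj : Function.Injective ρ := by
    intro s s' h
    have := List.nodup_iff_injective_get.mp hlnodup h
    simpa [Fin.ext_iff] using this
  have hρroot : ∀ s : Fin m, aeval (ρ s) p = 0 := by
    intro s
    have hmem : ρ s ∈ pC.roots := by
      rw [hρ]
      have : l.get (Fin.cast hllen.symm s) ∈ l := List.get_mem l _
      rwa [← Multiset.mem_toList]
    have := Polynomial.isRoot_of_mem_roots hmem
    rw [Polynomial.IsRoot, hpC, Polynomial.eval_map, ← Polynomial.aeval_def] at this
    exact this
  -- Vandermonde
  set W : Matrix (Fin m) (Fin m) ℂ := (Matrix.vandermonde ρ).transpose with hW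
  have hWdet : IsUnit W.det := by
    rw [hW, Matrix.det_transpose, Matrix.det_vandermonde]
    rw [isUnit_iff_ne_zero]
    rw [Finset.prod_ne_zero_iff]
    intro s _
    rw [Finset.prod_ne_zero_iff]
    intro s' hs'
    exact sub_ne_zero_of_ne (fun h => (Finset.mem_Ioi.mp hs').ne' ((hρinj h.symm).symm))
  set nv : Fin m → ℂ := fun s => (n (s : ℕ) : ℂ) with hnv
  set e : Fin m → ℂ := W⁻¹.mulVec nv with he
  have hWe : W.mulVec e = nv := by
    rw [he, Matrix.mulVec_mulVec, Matrix.mul_nonsing_inv _ hWdet, Matrix.one_mulVec]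
  have he_init : ∀ s : Fin m, ∑ s' : Fin m, e s' * ρ s' ^ (s : ℕ) = (n (s : ℕ) : ℂ) := by
    intro s
    have := congrFun hWe s
    simp only [Matrix.mulVec, dotProduct, hW, Matrix.transpose_apply,
      Matrix.vandermonde, hnv] at this
    rw [← this]
    refine Finset.sum_congr rfl fun s' _ => ?_
    simp [Matrix.of_apply]
    ring
  have hdecomp : ∀ i : ℕ, (n i : ℂ) = ∑ s : Fin m, e s * ρ s ^ i := by
    refine satRec_unique (a := fun j => (-(p.coeff j) : ℂ)) hnC ?_ ?_
    · exact satRec_lin Finset.univ e (fun s i => ρ s ^ i)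
        (fun s _ => satRec_pow (hroot_pow _ (hρroot s)))
    · intro s hs
      exact (he_init ⟨s, hs⟩).symm
  -- the bound
  set C0 : ℝ := (∑ s : Fin m, ‖e s‖) * (1 + β ^ m) with hC0
  have hβ0 : (0:ℝ) < β := lt_trans one_pos hβ1
  have hC0nn : 0 ≤ C0 := by
    apply mul_nonneg
    · exact Finset.sum_nonneg fun s _ => norm_nonneg _
    · positivity
  have hbound : ∀ (i : ℕ) (j : Fin m),
      |((n (i + (j : ℕ)) : ℝ) - β ^ (j : ℕ) * (n i : ℝ))| ≤ C0 := by
    intro i j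
    have hkey : ((n (i + (j : ℕ)) : ℂ) - (β:ℂ) ^ (j : ℕ) * (n i : ℂ))
        = ∑ s : Fin m, e s * ρ s ^ i * (ρ s ^ (j : ℕ) - (β:ℂ) ^ (j : ℕ)) := by
      rw [hdecomp (i + (j : ℕ)), hdecomp i, Finset.mul_sum, ← Finset.sum_sub_distrib]
      refine Finset.sum_congr rfl fun s _ => ?_
      rw [pow_add]; ring
    have habs : |((n (i + (j : ℕ)) : ℝ) - β ^ (j : ℕ) * (n i : ℝ))|
        = ‖(n (i + (j : ℕ)) : ℂ) - (β:ℂ) ^ (j : ℕ) * (n i : ℂ)‖ := by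
      rw [show ((n (i + (j : ℕ)) : ℂ) - (β:ℂ) ^ (j : ℕ) * (n i : ℂ))
          = (((n (i + (j : ℕ)) : ℝ) - β ^ (j : ℕ) * (n i : ℝ) : ℝ) : ℂ) by push_cast; ring]
      rw [Complex.norm_real, Real.norm_eq_abs]
    rw [habs, hkey]
    calc ‖∑ s : Fin m, e s * ρ s ^ i * (ρ s ^ (j : ℕ) - (β:ℂ) ^ (j : ℕ))‖
        ≤ ∑ s : Fin m, ‖e s * ρ s ^ i * (ρ s ^ (j : ℕ) - (β:ℂ) ^ (j : ℕ))‖ :=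
          norm_sum_le _ _
      _ ≤ ∑ s : Fin m, ‖e s‖ * (1 + β ^ m) := by
          refine Finset.sum_le_sum fun s _ => ?_
          rw [norm_mul, norm_mul, norm_pow]
          by_cases hs : ρ s = (β : ℂ)
          · rw [hs, sub_self, norm_zero, mul_zero]
            positivity
          · have h1 : ‖ρ s‖ ≤ 1 := hconj (ρ s) (hρroot s) hs
            have h2 : ‖ρ s‖ ^ i ≤ 1 := pow_le_one₀ (norm_nonneg _) h1
            have h3 : ‖ρ s ^ (j:ℕ) - (β:ℂ) ^ (j:ℕ)‖ ≤ 1 + β ^ m := by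
              calc ‖ρ s ^ (j:ℕ) - (β:ℂ) ^ (j:ℕ)‖
                  ≤ ‖ρ s ^ (j:ℕ)‖ + ‖(β:ℂ) ^ (j:ℕ)‖ :=
                    norm_sub_le _ _
                _ ≤ 1 + β ^ m := by
                    have hj1 : ‖ρ s ^ (j:ℕ)‖ ≤ 1 := by
                      rw [norm_pow]; exact pow_le_one₀ (norm_nonneg _) h1
                    have hj2 : ‖(β:ℂ) ^ (j:ℕ)‖ ≤ β ^ m := by
                      rw [norm_pow, Complex.norm_real, Real.norm_eq_abs, abs_of_pos hβ0]
                      exact pow_le_pow_right₀ (le_of_lt hβ1) (le_of_lt j.isLt)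
                    linarith
            calc ‖e s‖ * ‖ρ s‖ ^ i
                  * ‖ρ s ^ (j:ℕ) - (β:ℂ) ^ (j:ℕ)‖
                ≤ ‖e s‖ * 1 * (1 + β ^ m) := by
                  apply mul_le_mul
                  · apply mul_le_mul_of_nonneg_left h2 (norm_nonneg _)
                  · exact h3
                  · exact norm_nonneg _
                  · positivity
              _ = ‖e s‖ * (1 + β ^ m) := by ring
      _ = C0 := by rw [hC0, Finset.sum_mul]
  -- integrality of coefficients and common denominator
  have hcoeffZ : ∀ j : ℕ, ∃ z : ℤ, (z : ℚ) = p.coeff j := by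
    intro j
    have := minpoly.isIntegrallyClosed_eq_field_fractions' ℚ hint
    rw [hp, this, Polynomial.coeff_map]
    exact ⟨(minpoly ℤ β).coeff j, rfl⟩
  set D : ℕ := ∏ s ∈ Finset.range m, (n s).den with hD
  have hDpos : 0 < D := Finset.prod_pos fun s _ => (n s).pos
  have hDen : ∀ i, ∃ k : ℤ, (k : ℚ) = (D : ℚ) * n i := by
    intro i
    induction i using Nat.strong_induction_on with
    | _ i ih =>
      rcases lt_or_ge i m with h' | h'
      · have hdvd : (n i).den ∣ D := Finset.dvd_prod_of_mem _ (Finset.mem_range.mpr h')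
        obtain ⟨c, hc⟩ := hdvd
        refine ⟨(c : ℤ) * (n i).num, ?_⟩
        have hden : ((n i).den : ℚ) ≠ 0 := by
          exact_mod_cast (n i).den_nz
        have hni : n i * ((n i).den : ℚ) = ((n i).num : ℚ) := by
          nth_rewrite 1 [← Rat.num_div_den (n i)]
          rw [div_mul_cancel₀ _ hden]
        push_cast [hc]
        rw [← hni]; ring
      · obtain ⟨i', rfl⟩ : ∃ i', i = i' + m := ⟨i - m, (Nat.sub_add_cancel h').symm⟩
        choose z hz using hcoeffZ
        choose k hk using fun j (hj : j < m) => ih (i' + j) (by omega)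
        refine ⟨∑ j ∈ Finset.range m, (if hj : j < m then -(z j) * k j hj else 0), ?_⟩
        push_cast
        rw [hn i']
        rw [Finset.mul_sum]
        refine Finset.sum_congr rfl fun j hj => ?_
        have hjm := Finset.mem_range.mp hj
        rw [dif_pos hjm]
        push_cast
        rw [hz j, hk j hjm]
        ring
  choose N hN using hDen
  have hNreal : ∀ i, ((N i : ℝ)) = (D : ℝ) * ((n i : ℚ) : ℝ) := by
    intro i
    have := hN i
    have h2 : ((N i : ℚ) : ℝ) = (((D : ℚ) * n i : ℚ) : ℝ) := by rw [this]
    push_cast at h2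
    exact h2
  set M : ℕ := ⌈(D : ℝ) * C0⌉₊ + 1 with hM
  have hDC0M : (D : ℝ) * C0 ≤ (M : ℝ) := by
    refine le_trans (Nat.le_ceil _) ?_
    rw [hM]; push_cast; linarith
  set k : ℕ → Fin m → ℤ :=
    fun i j => N (i + (j : ℕ)) - ⌊(D : ℝ) * β ^ (j : ℕ) * ((n i : ℚ) : ℝ)⌋ with hk
  have hkbound : ∀ i (j : Fin m), -(M : ℤ) ≤ k i j ∧ k i j ≤ (M : ℤ) := by
    intro i j
    have h1 : |((N (i + (j : ℕ)) : ℝ)) - (D : ℝ) * β ^ (j : ℕ) * ((n i : ℚ) : ℝ)|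
        ≤ (D : ℝ) * C0 := by
      rw [hNreal]
      rw [show (D : ℝ) * ((n (i + (j : ℕ)) : ℚ) : ℝ) - (D : ℝ) * β ^ (j : ℕ) * ((n i : ℚ) : ℝ)
          = (D : ℝ) * (((n (i + (j : ℕ)) : ℚ) : ℝ) - β ^ (j : ℕ) * ((n i : ℚ) : ℝ)) by ring]
      rw [abs_mul, abs_of_nonneg (by positivity : (0 : ℝ) ≤ (D : ℝ))]
      exact mul_le_mul_of_nonneg_left (hbound i j) (by positivity)
    have habs := abs_le.mp h1
    have hfl := Int.floor_le ((D : ℝ) * β ^ (j : ℕ) * ((n i : ℚ) : ℝ))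
    have h3 : ⌊(D : ℝ) * β ^ (j : ℕ) * ((n i : ℚ) : ℝ)⌋ ≤ N (i + (j : ℕ)) + (M : ℤ) := by
      have h2 : (⌊(D : ℝ) * β ^ (j : ℕ) * ((n i : ℚ) : ℝ)⌋ : ℝ)
          ≤ ((N (i + (j : ℕ)) + (M : ℤ) : ℤ) : ℝ) := by
        rw [Int.cast_add, Int.cast_natCast]
        linarith [habs.1, habs.2, hfl, hDC0M]
      exact_mod_cast h2
    have h4 : N (i + (j : ℕ)) - (M : ℤ) ≤ ⌊(D : ℝ) * β ^ (j : ℕ) * ((n i : ℚ) : ℝ)⌋ := by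
      apply Int.le_floor.mpr
      rw [Int.cast_sub, Int.cast_natCast]
      linarith [habs.1, habs.2, hDC0M]
    constructor
    · simp only [hk]; omega
    · simp only [hk]; omega
  have hκmem : ∀ i (j : Fin m), (k i j + (M : ℤ)).toNat < 2 * M + 1 := by
    intro i j; have := hkbound i j; omega
  set Gr : (Fin m → Fin (2 * M + 1)) → (Fin 1 → ℝ) → ℂ := fun κ x =>
    ∑ j : Fin m, d j *
      Complex.ofReal ((((⌊(D : ℝ) * β ^ (j : ℕ) * x 0⌋ + (((κ j : ℕ) : ℤ) - (M : ℤ))) : ℤ) : ℝ)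
        * ((D : ℝ))⁻¹) with hGr
  have hβL : ((β : ℝ) : ℂ) ∈ L := by
    rw [hL]
    apply IntermediateField.subset_adjoin
    rw [Polynomial.mem_rootSet]
    exact ⟨hp0, hβroot⟩
  have hratL : ∀ q : ℚ, (q : ℂ) ∈ L := fun q => SubfieldClass.ratCast_mem L q
  have hdL : ∀ j, d j ∈ L := by
    intro j
    rw [hd]
    refine sum_mem fun s' _ => mul_mem ?_ (pow_mem hβL _)
    exact hratL (B j s')
  refine ⟨Fintype.card (Fin m → Fin (2 * M + 1)),
    fun c q => Gr ((Fintype.equivFin _).symm c) (fun _ => (q : ℝ)), ?_, ?_, ?_⟩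
  · -- IsGPMapQC
    intro c
    set κ := (Fintype.equivFin (Fin m → Fin (2 * M + 1))).symm c with hκ
    refine ⟨Gr κ, ⟨?_, ?_⟩, fun q => rfl⟩
    · have hre : ∀ x, (∑ j : Fin m, (fun (j : Fin m) (x : Fin 1 → ℝ) =>
          ((d j).re * (D : ℝ)⁻¹) * ((⌊(D : ℝ) * β ^ (j : ℕ) * x 0⌋ : ℝ)
            + ((((κ j : ℕ) : ℤ) - (M : ℤ) : ℤ) : ℝ))) j x) = (Gr κ x).re := by
        intro x
        rw [hGr]
        rw [Complex.re_sum]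
        refine Finset.sum_congr rfl fun j _ => ?_
        simp only [Complex.mul_re, Complex.ofReal_re, Complex.ofReal_im, mul_zero, sub_zero]
        push_cast
        ring
      exact (isGP_finsum Finset.univ _ (fun j _ => isGP_floor_affine _ _ _)).congr hre
    · have him : ∀ x, (∑ j : Fin m, (fun (j : Fin m) (x : Fin 1 → ℝ) =>
          ((d j).im * (D : ℝ)⁻¹) * ((⌊(D : ℝ) * β ^ (j : ℕ) * x 0⌋ : ℝ)
            + ((((κ j : ℕ) : ℤ) - (M : ℤ) : ℤ) : ℝ))) j x) = (Gr κ x).im := by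
        intro x
        rw [hGr]
        rw [Complex.im_sum]
        refine Finset.sum_congr rfl fun j _ => ?_
        simp only [Complex.mul_im, Complex.ofReal_re, Complex.ofReal_im, mul_zero, add_zero]
        push_cast
        ring
      exact (isGP_finsum Finset.univ _ (fun j _ => isGP_floor_affine _ _ _)).congr him
  · -- values in L
    intro c q
    rw [hGr]
    refine sum_mem fun j _ => mul_mem (hdL j) ?_
    rw [show ((((((⌊(D : ℝ) * β ^ (j : ℕ) * (fun _ : Fin 1 => (q : ℝ)) 0⌋
        + ((((Fintype.equivFin (Fin m → Fin (2 * M + 1))).symm c j : ℕ) : ℤ) - (M : ℤ))) : ℤ) : ℝ)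
        * ((D : ℝ))⁻¹ : ℝ)) : ℂ)
        = (((⌊(D : ℝ) * β ^ (j : ℕ) * (q : ℝ)⌋
            + ((((Fintype.equivFin (Fin m → Fin (2 * M + 1))).symm c j : ℕ) : ℤ) - (M : ℤ))) : ℤ) : ℂ)
          * (((D : ℕ) : ℂ))⁻¹ by push_cast; ring]
    exact mul_mem (_root_.intCast_mem L _) (inv_mem (_root_.natCast_mem L _))
  · -- the interpolation property
    intro i
    set κi : Fin m → Fin (2 * M + 1) := fun j => ⟨(k i j + (M : ℤ)).toNat, hκmem i j⟩ with hκi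
    refine ⟨(Fintype.equivFin _) κi, ?_⟩
    show Gr ((Fintype.equivFin (Fin m → Fin (2 * M + 1))).symm
      ((Fintype.equivFin (Fin m → Fin (2 * M + 1))) κi)) (fun _ => ((n i : ℚ) : ℝ))
      = ((β : ℝ) : ℂ) ^ i
    rw [Equiv.symm_apply_apply]
    rw [hGr, hmain i]
    refine Finset.sum_congr rfl fun j _ => ?_
    congr 1
    have hκiz : (((κi j : ℕ) : ℤ) - (M : ℤ)) = k i j := by
      rw [hκi]
      simp only
      rw [Int.toNat_of_nonneg (by linarith [(hkbound i j).1])]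
      ring
    have hinner : (⌊(D : ℝ) * β ^ (j : ℕ) * ((fun _ : Fin 1 => ((n i : ℚ) : ℝ)) 0)⌋
        + ((((κi j : ℕ) : ℤ) - (M : ℤ)))) = N (i + (j : ℕ)) := by
      rw [hκiz, hk]
      ring
    rw [hinner]
    rw [show ((((N (i + (j : ℕ)) : ℤ) : ℝ) * ((D : ℝ))⁻¹ : ℝ) : ℂ)
        = Complex.ofReal ((N (i + (j : ℕ)) : ℝ) * ((D : ℝ))⁻¹) from rfl]
    rw [hNreal]
    have hDne : ((D : ℝ)) ≠ 0 := by positivity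
    rw [show (D : ℝ) * ((n (i + (j : ℕ)) : ℚ) : ℝ) * ((D : ℝ))⁻¹
        = ((n (i + (j : ℕ)) : ℚ) : ℝ) by field_simp]
    push_cast
    rfl
end

section
/- Let β, γ ∈ ℂ be algebraic numbers with the same minimal polynomial over ℚ, and suppose that β and γ are nonzero and are not roots of unity. Let k and l be nonzero integers such that β^k = γ^l. Then either k = l and γ/β is a root of unity, or k = −l and γ·β is a root of unity. -/
open Polynomial IntermediateField

lemma aux_zpow {F : Type*} [Field F] {x : F} {d : ℤ} (hd : d ≠ 0) (h : x ^ d = 1) :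
    IsRootOfUnity x := by
  refine ⟨d.natAbs, Int.natAbs_pos.2 hd, ?_⟩
  have h2 : x ^ ((d.natAbs : ℤ)) = 1 := by
    rcases Int.natAbs_eq d with he | he
    · rw [← he]; exact h
    · have h3 : (d.natAbs : ℤ) = -d := by omega
      rw [h3, zpow_neg, h, inv_one]
  rw [← zpow_natCast]; exact h2


set_option maxHeartbeats 2000000 in
set_option synthInstance.maxHeartbeats 1000000 in
/-- if `β` and `γ` are conjugate algebraic numbers, neither zero nor
roots of unity, and `β^k = γ^l` for nonzero integers `k, l`, then `k = ±l` and
`γ = ω β^{±1}` for a root of unity `ω`. -/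
theorem stmt16 (β γ : ℂ)
    (hβalg : IsAlgebraic ℚ β) (hγalg : IsAlgebraic ℚ γ)
    (hconj : minpoly ℚ β = minpoly ℚ γ)
    (hβ0 : β ≠ 0) (hγ0 : γ ≠ 0)
    (hβu : ¬ IsRootOfUnity β) (hγu : ¬ IsRootOfUnity γ)
    (k l : ℤ) (hk : k ≠ 0) (hl : l ≠ 0) (hkl : β ^ k = γ ^ l) :
    (k = l ∧ IsRootOfUnity (γ / β)) ∨ (k = -l ∧ IsRootOfUnity (γ * β)) := by
  classical
  -- Step 1: k = l or k = -l.
  have hkl' : k = l ∨ k = -l := by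
    set Q := _root_.algebraicClosure ℚ ℂ with hQ
    set b : Q := ⟨β, mem_algebraicClosure_iff.2 hβalg⟩ with hb
    set c : Q := ⟨γ, mem_algebraicClosure_iff.2 hγalg⟩ with hc
    have hbβ : (algebraMap Q ℂ) b = β := rfl
    have hcγ : (algebraMap Q ℂ) c = γ := rfl
    have hinj : Function.Injective (algebraMap Q ℂ) := (algebraMap Q ℂ).injective
    have hmb : minpoly ℚ b = minpoly ℚ β := by
      conv_rhs => rw [← hbβ]
      exact (minpoly.algebraMap_eq hinj b).symm
    have hmc : minpoly ℚ c = minpoly ℚ γ := by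
      conv_rhs => rw [← hcγ]
      exact (minpoly.algebraMap_eq hinj c).symm
    haveI : Algebra.IsAlgebraic ℚ Q := algebraicClosure.isAlgebraic ℚ ℂ
    haveI : Normal ℚ Q := @IsAlgClosure.normal ℚ Q _ _ _ (algebraicClosure.isAlgClosure ℚ ℂ)
    have hbalg : IsAlgebraic ℚ b := Algebra.IsAlgebraic.isAlgebraic b
    have h_ev : (Polynomial.aeval c) (minpoly ℚ b) = 0 := by
      rw [hmb, hconj, ← hmc]; exact minpoly.aeval ℚ c
    obtain ⟨σ, hσ⟩ := minpoly.exists_algEquiv_of_root' (K := ℚ) (L := Q) hbalg h_ev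
    -- hσ : σ b = c
    have hb0 : b ≠ 0 := fun h => hβ0 (by rw [← hbβ, h, map_zero])
    have hbint : IsIntegral ℚ b := hbalg.isIntegral
    have hp0 : minpoly ℚ b ≠ 0 := minpoly.ne_zero hbint
    -- the basic relation in Q
    have hbc : b ^ k = c ^ l := by
      apply hinj
      rw [map_zpow₀, map_zpow₀, hbβ, hcγ]; exact hkl
    -- each σ^m b is a root of minpoly b
    have hroot : ∀ m : ℕ, (σ ^ m) b ∈ (minpoly ℚ b).rootSet Q := by
      intro m
      rw [Polynomial.mem_rootSet]
      refine ⟨hp0, ?_⟩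
      have : minpoly ℚ ((σ ^ m) b) = minpoly ℚ b := minpoly.algEquiv_eq (σ ^ m) b
      rw [← this]; exact minpoly.aeval ℚ _
    -- pigeonhole: find i < j with σ^i b = σ^j b
    have hfin : ((minpoly ℚ b).rootSet Q).Finite := (minpoly ℚ b).rootSet_finite Q
    have : ¬ Function.Injective (fun m : ℕ => (⟨(σ ^ m) b, hroot m⟩ : (minpoly ℚ b).rootSet Q)) := by
      intro hinj2
      exact Set.not_infinite.2 hfin (Set.infinite_of_injective_forall_mem
        (f := fun m : ℕ => (σ ^ m) b) (fun m₁ m₂ h12 => by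
          have := hinj2 (a₁ := m₁) (a₂ := m₂) (by simpa using h12); exact this) hroot)
    obtain ⟨i, j, hij, hne⟩ : ∃ i j : ℕ, (σ ^ i) b = (σ ^ j) b ∧ i ≠ j := by
      simp only [Function.Injective, not_forall] at this
      obtain ⟨i, j, h1, h2⟩ := this
      exact ⟨i, j, congrArg Subtype.val h1, h2⟩
    -- wlog i < j, get n > 0 with σ^n b = b
    obtain ⟨n, hn, hσn⟩ : ∃ n : ℕ, 0 < n ∧ (σ ^ n) b = b := by
      rcases lt_or_gt_of_ne hne with h | h
      · refine ⟨j - i, by omega, ?_⟩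
        have hcomm : (σ ^ i) ((σ ^ (j - i)) b) = (σ ^ i) b := by
          have : σ ^ i * σ ^ (j - i) = σ ^ j := by rw [← pow_add]; congr 1; omega
          calc (σ ^ i) ((σ ^ (j - i)) b) = (σ ^ i * σ ^ (j - i)) b := rfl
            _ = (σ ^ j) b := by rw [this]
            _ = (σ ^ i) b := hij.symm
        exact (σ ^ i).injective hcomm
      · refine ⟨i - j, by omega, ?_⟩
        have hcomm : (σ ^ j) ((σ ^ (i - j)) b) = (σ ^ j) b := by
          have : σ ^ j * σ ^ (i - j) = σ ^ i := by rw [← pow_add]; congr 1; omega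
          calc (σ ^ j) ((σ ^ (i - j)) b) = (σ ^ j * σ ^ (i - j)) b := rfl
            _ = (σ ^ i) b := by rw [this]
            _ = (σ ^ j) b := hij
        exact (σ ^ j).injective hcomm
    -- key induction
    have key : ∀ m : ℕ, b ^ (k ^ m) = ((σ ^ m) b) ^ (l ^ m) := by
      intro m
      induction m with
      | zero => simp
      | succ m ih =>
        have step : ((σ ^ m) b) ^ k = ((σ ^ (m + 1)) b) ^ l := by
          have := congrArg (σ ^ m) hbc
          rw [map_zpow₀, map_zpow₀] at this
          rw [this]
          congr 1
          rw [← hσ]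
          calc (σ ^ m) (σ b) = (σ ^ m * σ) b := rfl
            _ = (σ ^ (m + 1)) b := by rw [← pow_succ]
        calc b ^ (k ^ (m + 1)) = b ^ (k ^ m * k) := by rw [← pow_succ]
          _ = (b ^ (k ^ m)) ^ k := by rw [zpow_mul]
          _ = (((σ ^ m) b) ^ (l ^ m)) ^ k := by rw [ih]
          _ = (((σ ^ m) b) ^ k) ^ (l ^ m) := by rw [← zpow_mul, mul_comm, zpow_mul]
          _ = (((σ ^ (m + 1)) b) ^ l) ^ (l ^ m) := by rw [step]
          _ = ((σ ^ (m + 1)) b) ^ (l ^ (m + 1)) := by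
              rw [← zpow_mul, mul_comm, ← pow_succ]
    have hkey : b ^ (k ^ n) = b ^ (l ^ n) := by rw [key n, hσn]
    -- hence k^n = l^n
    have hkn : k ^ n = l ^ n := by
      by_contra hne2
      apply hβu
      have hβkey : β ^ (k ^ n) = β ^ (l ^ n) := by
        have := congrArg (algebraMap Q ℂ) hkey
        rwa [map_zpow₀, map_zpow₀, hbβ] at this
      have : β ^ (k ^ n - l ^ n) = 1 := by
        rw [zpow_sub₀ hβ0, hβkey, div_self (zpow_ne_zero _ hβ0)]
      exact aux_zpow (sub_ne_zero.2 hne2) this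
    have habs : k.natAbs = l.natAbs := by
      have h1 : k.natAbs ^ n = l.natAbs ^ n := by
        have := congrArg Int.natAbs hkn
        simpa [Int.natAbs_pow] using this
      exact Nat.pow_left_injective hn.ne' h1
    rcases Int.natAbs_eq_natAbs_iff.1 habs with h | h
    · exact Or.inl h
    · exact Or.inr h
  -- Step 2: conclude
  rcases hkl' with h | h
  · left
    refine ⟨h, ?_⟩
    subst h
    apply aux_zpow hk (x := γ / β)
    rw [div_zpow, ← hkl, div_self (zpow_ne_zero _ hβ0)]
  · right
    refine ⟨h, ?_⟩
    subst h
    apply aux_zpow hl (x := γ * β)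
    rw [zpow_neg] at hkl
    rw [mul_zpow, ← hkl]
    exact inv_mul_cancel₀ (zpow_ne_zero _ hβ0)
end

section
/- Let β ∈ ℂ be a nonzero algebraic number of degree m over ℚ, let K = ℚ(β), and let γ, x, y ∈ K with x ≠ 0. Suppose that Tr_{K/ℚ}(β^i · x) = Tr_{K/ℚ}(γ^i · y) for all integers 0 ≤ i < 2m. Then there exists a ℚ-algebra automorphism σ of K such that σ(β) = γ and σ(x) = y. -/
open Polynomial IntermediateField

set_option maxHeartbeats 1000000 in
set_option synthInstance.maxHeartbeats 400000 in
/-- if `β` is a nonzero algebraic number of degree `m`, `K = ℚ(β)`,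
`γ, x, y ∈ K` with `x ≠ 0`, and `Tr_{K/ℚ}(β^i x) = Tr_{K/ℚ}(γ^i y)` for `0 ≤ i < 2m`,
then there is a `ℚ`-algebra automorphism `σ` of `K` with `σ(β) = γ` and `σ(x) = y`. -/
theorem stmt17 (β : ℂ) (hβalg : IsAlgebraic ℚ β) (hβ0 : β ≠ 0)
    (γ x y : ℚ⟮β⟯) (hx : x ≠ 0)
    (htr : ∀ i : ℕ, i < 2 * (minpoly ℚ β).natDegree →
      Algebra.trace ℚ ℚ⟮β⟯ ((AdjoinSimple.gen ℚ β) ^ i * x) =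
        Algebra.trace ℚ ℚ⟮β⟯ (γ ^ i * y)) :
    ∃ σ : ℚ⟮β⟯ ≃ₐ[ℚ] ℚ⟮β⟯, σ (AdjoinSimple.gen ℚ β) = γ ∧ σ x = y := by
  classical
  have hint : IsIntegral ℚ β := hβalg.isIntegral
  haveI : FiniteDimensional ℚ ℚ⟮β⟯ := IntermediateField.adjoin.finiteDimensional hint
  set g : ℚ⟮β⟯ := AdjoinSimple.gen ℚ β with hgdef
  set m := (minpoly ℚ β).natDegree with hmdef
  -- evaluation at the generator is injective on embeddings
  have hkey : ∀ σ : ℚ⟮β⟯ →ₐ[ℚ] ℂ,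
      σ g = ((algHomAdjoinIntegralEquiv ℚ (K := ℂ) hint) σ : ℂ) := by
    intro σ
    conv_lhs => rw [← (algHomAdjoinIntegralEquiv ℚ (K := ℂ) hint).symm_apply_apply σ]
    exact algHomAdjoinIntegralEquiv_symm_apply_gen ℚ hint _
  have hinj : Function.Injective (fun σ : ℚ⟮β⟯ →ₐ[ℚ] ℂ => σ g) := by
    intro σ σ' h
    simp only [hkey] at h
    exact (algHomAdjoinIntegralEquiv ℚ (K := ℂ) hint).injective (Subtype.coe_injective h)
  have hvalg : (ℚ⟮β⟯).val g = β := AdjoinSimple.coe_gen ℚ β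
  have hcond : ∀ σ : ℚ⟮β⟯ →ₐ[ℚ] ℂ, σ g = β ↔ σ = (ℚ⟮β⟯).val := fun σ =>
    ⟨fun h => hinj (h.trans hvalg.symm), fun h => h ▸ hvalg⟩
  -- trace identities give power sums
  have hsum : ∀ i : ℕ, i < 2 * m →
      ∑ σ : ℚ⟮β⟯ →ₐ[ℚ] ℂ, σ x * σ g ^ i = ∑ σ : ℚ⟮β⟯ →ₐ[ℚ] ℂ, σ y * σ γ ^ i := by
    intro i hi
    have h1 := trace_eq_sum_embeddings (K := ℚ) (L := ℚ⟮β⟯) (E := ℂ) (x := g ^ i * x)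
    have h2 := trace_eq_sum_embeddings (K := ℚ) (L := ℚ⟮β⟯) (E := ℂ) (x := γ ^ i * y)
    have h0 := congrArg (algebraMap ℚ ℂ) (htr i hi)
    rw [h1, h2] at h0
    calc ∑ σ : ℚ⟮β⟯ →ₐ[ℚ] ℂ, σ x * σ g ^ i
        = ∑ σ : ℚ⟮β⟯ →ₐ[ℚ] ℂ, σ (g ^ i * x) :=
          Finset.sum_congr rfl fun σ _ => by rw [map_mul, map_pow, mul_comm]
      _ = ∑ σ : ℚ⟮β⟯ →ₐ[ℚ] ℂ, σ (γ ^ i * y) := h0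
      _ = ∑ σ : ℚ⟮β⟯ →ₐ[ℚ] ℂ, σ y * σ γ ^ i :=
          (Finset.sum_congr rfl fun σ _ => by rw [map_mul, map_pow, mul_comm]).symm
  set c : (ℚ⟮β⟯ →ₐ[ℚ] ℂ) ⊕ (ℚ⟮β⟯ →ₐ[ℚ] ℂ) → ℂ :=
    Sum.elim (fun σ => σ x) (fun σ => -(σ y)) with hcdef
  set v : (ℚ⟮β⟯ →ₐ[ℚ] ℂ) ⊕ (ℚ⟮β⟯ →ₐ[ℚ] ℂ) → ℂ :=
    Sum.elim (fun σ => σ g) (fun σ => σ γ) with hvdef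
  have hzero : ∀ i : ℕ, i < 2 * m → ∑ t, c t * v t ^ i = 0 := by
    intro i hi
    rw [Fintype.sum_sum_type]
    simp only [hcdef, hvdef, Sum.elim_inl, Sum.elim_inr, neg_mul]
    rw [Finset.sum_neg_distrib, hsum i hi, add_neg_cancel]
  set S : Finset ℂ := Finset.univ.image v with hSdef
  set n := S.card with hndef
  have hnle : n ≤ 2 * m := by
    calc n ≤ Finset.univ.card := Finset.card_image_le
      _ = 2 * m := by
          rw [Finset.card_univ, Fintype.card_sum, AlgHom.card,
            IntermediateField.adjoin.finrank hint]
          ring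
  set w : Fin n → ℂ := fun j => (S.equivFin.symm j : ℂ) with hwdef
  have hw : Function.Injective w := fun a b h =>
    S.equivFin.symm.injective (Subtype.coe_injective h)
  set C : Fin n → ℂ := fun j => ∑ t ∈ Finset.univ.filter (fun t => v t = w j), c t with hCdef
  have hmemS : ∀ t, v t ∈ S := fun t => Finset.mem_image_of_mem v (Finset.mem_univ t)
  set jdx : ((ℚ⟮β⟯ →ₐ[ℚ] ℂ) ⊕ (ℚ⟮β⟯ →ₐ[ℚ] ℂ)) → Fin n :=
    fun t => S.equivFin ⟨v t, hmemS t⟩ with hjdxdef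
  have hjdx : ∀ t, w (jdx t) = v t := fun t => by
    simp only [hwdef, hjdxdef, Equiv.symm_apply_apply]
  have hiff : ∀ t j, (v t = w j) ↔ (jdx t = j) := by
    intro t j
    constructor
    · intro h
      exact hw ((hjdx t).trans h)
    · rintro rfl
      exact (hjdx t).symm
  have hC : C = 0 := by
    apply Matrix.eq_zero_of_forall_pow_sum_mul_pow_eq_zero hw
    intro i
    calc ∑ j : Fin n, C j * w j ^ (i : ℕ)
        = ∑ j : Fin n, ∑ t ∈ Finset.univ.filter (fun t => v t = w j), c t * v t ^ (i : ℕ) := by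
          refine Finset.sum_congr rfl fun j _ => ?_
          rw [hCdef, Finset.sum_mul]
          exact Finset.sum_congr rfl fun t ht => by rw [(Finset.mem_filter.mp ht).2]
      _ = ∑ j : Fin n, ∑ t ∈ Finset.univ.filter (fun t => jdx t = j), c t * v t ^ (i : ℕ) := by
          refine Finset.sum_congr rfl fun j _ => Finset.sum_congr ?_ fun _ _ => rfl
          exact Finset.filter_congr fun t _ => by rw [hiff t j]
      _ = ∑ t, c t * v t ^ (i : ℕ) :=
          Finset.sum_fiberwise_of_maps_to (fun t _ => Finset.mem_univ _) _
      _ = 0 := hzero _ (lt_of_lt_of_le i.2 hnle)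
  have hβS : β ∈ S := by
    refine Finset.mem_image.mpr ⟨Sum.inl (ℚ⟮β⟯).val, Finset.mem_univ _, ?_⟩
    rw [hvdef]
    exact hvalg
  obtain ⟨jβ, hjβ⟩ : ∃ j : Fin n, w j = β := ⟨S.equivFin ⟨β, hβS⟩, by simp [hwdef]⟩
  have hCβ : ∑ t ∈ Finset.univ.filter (fun t => v t = β), c t = 0 := by
    have h0 := congrFun hC jβ
    simpa [hCdef, hjβ] using h0
  have hxy : (x : ℂ) = ∑ σ : ℚ⟮β⟯ →ₐ[ℚ] ℂ, (if σ γ = β then (σ y : ℂ) else 0) := by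
    rw [Finset.sum_filter, Fintype.sum_sum_type] at hCβ
    simp only [hcdef, hvdef, Sum.elim_inl, Sum.elim_inr] at hCβ
    have hA : ∑ σ : ℚ⟮β⟯ →ₐ[ℚ] ℂ, (if σ g = β then σ x else 0) = (x : ℂ) := by
      exact (Finset.sum_eq_single_of_mem _ (Finset.mem_univ _)
        (fun σ _ hσ => if_neg (fun h => hσ ((hcond σ).mp h)))).trans (if_pos hvalg)
    have hB : ∑ σ : ℚ⟮β⟯ →ₐ[ℚ] ℂ, (if σ γ = β then -(σ y) else 0)
        = -∑ σ : ℚ⟮β⟯ →ₐ[ℚ] ℂ, (if σ γ = β then (σ y : ℂ) else 0) := by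
      rw [← Finset.sum_neg_distrib]
      exact Finset.sum_congr rfl fun σ _ => by split <;> simp
    rw [hA, hB, ← sub_eq_add_neg] at hCβ
    exact sub_eq_zero.mp hCβ
  have hex : ∃ σ : ℚ⟮β⟯ →ₐ[ℚ] ℂ, σ γ = β := by
    by_contra hcon
    push_neg at hcon
    rw [Finset.sum_congr rfl (fun σ _ => if_neg (hcon σ)), Finset.sum_const_zero] at hxy
    exact hx (by exact_mod_cast hxy)
  obtain ⟨σk, hσk⟩ := hex
  have hKle : ℚ⟮β⟯ ≤ σk.fieldRange := by
    rw [IntermediateField.adjoin_le_iff]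
    exact Set.singleton_subset_iff.mpr ⟨γ, hσk⟩
  let e1 : ℚ⟮β⟯ ≃ₐ[ℚ] σk.fieldRange := AlgEquiv.ofInjectiveField σk
  haveI : FiniteDimensional ℚ σk.fieldRange := LinearEquiv.finiteDimensional e1.toLinearEquiv
  have hrange : σk.fieldRange = ℚ⟮β⟯ :=
    (IntermediateField.eq_of_le_of_finrank_le hKle (le_of_eq e1.toLinearEquiv.finrank_eq.symm)).symm
  let τ : ℚ⟮β⟯ ≃ₐ[ℚ] ℚ⟮β⟯ := e1.trans (IntermediateField.equivOfEq hrange)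
  have hτ : ∀ z : ℚ⟮β⟯, ((τ z : ℚ⟮β⟯) : ℂ) = σk z := fun z => rfl
  have hτγ : τ γ = g := by
    refine Subtype.ext ?_
    show ((τ γ : ℚ⟮β⟯) : ℂ) = (g : ℂ)
    rw [hτ γ, hσk]
    exact (AdjoinSimple.coe_gen ℚ β).symm
  have huniq : ∀ σ : ℚ⟮β⟯ →ₐ[ℚ] ℂ, σ γ = β ↔ σ = ((ℚ⟮β⟯).val.comp τ.toAlgHom) := by
    intro σ
    constructor
    · intro h
      have h2 : (σ.comp τ.symm.toAlgHom) g = β := by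
        rw [AlgHom.comp_apply, ← hτγ, AlgEquiv.coe_algHom, AlgEquiv.symm_apply_apply, h]
      have h3 : σ.comp τ.symm.toAlgHom = (ℚ⟮β⟯).val := (hcond _).mp h2
      ext z
      have h4 := DFunLike.congr_fun h3 (τ z)
      simp only [AlgHom.comp_apply, AlgEquiv.coe_algHom, AlgEquiv.symm_apply_apply] at h4
      exact h4
    · intro h
      rw [h]
      show (ℚ⟮β⟯).val (τ γ) = β
      rw [hτγ, hvalg]
  have hfinal : (x : ℂ) = ((τ y : ℚ⟮β⟯) : ℂ) := by
    rw [hxy]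
    simp only [huniq]
    rw [Finset.sum_ite_eq' Finset.univ ((ℚ⟮β⟯).val.comp τ.toAlgHom)
      (fun σ => (σ y : ℂ))]
    simp
    rfl
  have hxτ : x = τ y := Subtype.coe_injective hfinal
  refine ⟨τ.symm, ?_, ?_⟩
  · rw [← hτγ, AlgEquiv.symm_apply_apply]
  · rw [hxτ, AlgEquiv.symm_apply_apply]
end
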